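/- arXiv:2512.20434 — 6 statements merged into one kernel-verified Lean document; each statement's English description precedes it below -/
import Mathlib

section
/- Let n ≥ 1 and m ≥ 1. The map ρ ↦ ρ(1) is a bijection between the set of magnetic representations of the magnetic group (ℤ/(2n), mod 2) on ℂᵐ and the set of matrices A ∈ GL(m, ℂ) satisfying (A · σ(A))ⁿ = I. -/
open Matrix

noncomputable section

/-- Entrywise complex conjugation of a complex matrix. -/
def conjMat {m n : ℕ} (M : Matrix (Fin m) (Fin n) ℂ) : Matrix (Fin m) (Fin n) ℂ :=
  M.map (starRingEnd ℂ)

/-- Entrywise complex conjugation of a vector in `ℂⁿ`. -/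
def conjVec {n : ℕ} (v : Fin n → ℂ) : Fin n → ℂ :=
  fun i => starRingEnd ℂ (v i)

/-- `σ^ε` on matrices, for `ε : ℤ/2` (written multiplicatively). -/
def sigmaPow {m n : ℕ} (ε : Multiplicative (ZMod 2)) (M : Matrix (Fin m) (Fin n) ℂ) :
    Matrix (Fin m) (Fin n) ℂ :=
  if ε = 1 then M else conjMat M

/-- `σ^ε` on vectors. -/
def sigmaPowVec {n : ℕ} (ε : Multiplicative (ZMod 2)) (v : Fin n → ℂ) : Fin n → ℂ :=
  if ε = 1 then v else conjVec v

/-- A magnetic representation of the magnetic group `(G, φ)` on `ℂⁿ`: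
`ρ (g * h) = ρ g * σ^(φ g) (ρ h)`. -/
def IsMagneticRep {G : Type*} [Group G] (φ : G →* Multiplicative (ZMod 2)) {n : ℕ}
    (ρ : G → Matrix.GeneralLinearGroup (Fin n) ℂ) : Prop :=
  ∀ g h : G, (ρ (g * h) : Matrix (Fin n) (Fin n) ℂ) =
    (ρ g : Matrix (Fin n) (Fin n) ℂ) * sigmaPow (φ g) (ρ h : Matrix (Fin n) (Fin n) ℂ)

/-- A morphism of magnetic representations from `ρ₁` to `ρ₂`. -/
def IsMagMorphism {G : Type*} [Group G] (φ : G →* Multiplicative (ZMod 2)) {n m : ℕ}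
    (ρ₁ : G → Matrix.GeneralLinearGroup (Fin n) ℂ)
    (ρ₂ : G → Matrix.GeneralLinearGroup (Fin m) ℂ)
    (T : Matrix (Fin m) (Fin n) ℂ) : Prop :=
  ∀ g : G, T * (ρ₁ g : Matrix (Fin n) (Fin n) ℂ) =
    (ρ₂ g : Matrix (Fin m) (Fin m) ℂ) * sigmaPow (φ g) T

/-- A `ℂ`-subspace invariant under a magnetic representation. -/
def MagInvariant {G : Type*} [Group G] (φ : G →* Multiplicative (ZMod 2)) {n : ℕ}
    (ρ : G → Matrix.GeneralLinearGroup (Fin n) ℂ) (W : Submodule ℂ (Fin n → ℂ)) : Prop :=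
  ∀ g : G, ∀ w ∈ W, (ρ g : Matrix (Fin n) (Fin n) ℂ).mulVec (sigmaPowVec (φ g) w) ∈ W

/-- An irreducible magnetic representation. -/
def IsIrredMagRep {G : Type*} [Group G] (φ : G →* Multiplicative (ZMod 2)) {n : ℕ}
    (ρ : G → Matrix.GeneralLinearGroup (Fin n) ℂ) : Prop :=
  (⊥ : Submodule ℂ (Fin n → ℂ)) ≠ ⊤ ∧
    ∀ W : Submodule ℂ (Fin n → ℂ), MagInvariant φ ρ W → W = ⊥ ∨ W = ⊤

/-- Irreducibility of a classical (complex linear) representation given by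
a family of invertible matrices. -/
def IsClassIrreducible {H : Type*} {n : ℕ}
    (ρ : H → Matrix.GeneralLinearGroup (Fin n) ℂ) : Prop :=
  (⊥ : Submodule ℂ (Fin n → ℂ)) ≠ ⊤ ∧
    ∀ W : Submodule ℂ (Fin n → ℂ),
      (∀ h : H, ∀ w ∈ W, (ρ h : Matrix (Fin n) (Fin n) ℂ).mulVec w ∈ W) → W = ⊥ ∨ W = ⊤

theorem sq_mem {G : Type*} [Group G] (φ : G →* Multiplicative (ZMod 2)) (a : G) :
    a * a ∈ φ.ker := by
  have h2 : ∀ x : Multiplicative (ZMod 2), x * x = 1 := by decide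
  simp [MonoidHom.mem_ker, _root_.map_mul, h2]

/-- `g ↦ a⁻¹ g a` as a map `G₀ → G₀` for `G₀ = ker φ`. -/
def kerConj {G : Type*} [Group G] (φ : G →* Multiplicative (ZMod 2)) (a : G) (g : φ.ker) :
    φ.ker :=
  ⟨a⁻¹ * g * a, by
    have hg : φ g = 1 := g.2
    simp [MonoidHom.mem_ker, _root_.map_mul, map_inv, hg]⟩

/-- Entrywise conjugation as a map `GL(n, ℂ) → GL(n, ℂ)`. -/
def conjGL {n : ℕ} (A : Matrix.GeneralLinearGroup (Fin n) ℂ) :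
    Matrix.GeneralLinearGroup (Fin n) ℂ :=
  Units.map (RingHom.toMonoidHom (RingHom.mapMatrix (starRingEnd ℂ))) A

theorem conjGL_conjGL {n : ℕ} (A : Matrix.GeneralLinearGroup (Fin n) ℂ) :
    conjGL (conjGL A) = A := by
  apply Units.ext
  ext i j
  simp [conjGL]

theorem conjMat_mul {l m n : ℕ} (M : Matrix (Fin l) (Fin m) ℂ) (N : Matrix (Fin m) (Fin n) ℂ) :
    conjMat (M * N) = conjMat M * conjMat N := by
  ext i j
  simp [conjMat, Matrix.mul_apply, map_sum]

theorem conjMat_add {m n : ℕ} (M N : Matrix (Fin m) (Fin n) ℂ) :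
    conjMat (M + N) = conjMat M + conjMat N := by
  ext i j
  simp [conjMat]

theorem sigmaPow_mul {l m n : ℕ} (ε : Multiplicative (ZMod 2))
    (M : Matrix (Fin l) (Fin m) ℂ) (N : Matrix (Fin m) (Fin n) ℂ) :
    sigmaPow ε (M * N) = sigmaPow ε M * sigmaPow ε N := by
  unfold sigmaPow
  split
  · rfl
  · exact conjMat_mul M N

theorem sigmaPow_add {m n : ℕ} (ε : Multiplicative (ZMod 2))
    (M N : Matrix (Fin m) (Fin n) ℂ) :
    sigmaPow ε (M + N) = sigmaPow ε M + sigmaPow ε N := by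
  unfold sigmaPow
  split
  · rfl
  · exact conjMat_add M N

/-- The `ℝ`-algebra of endomorphisms of a magnetic representation. -/
def MagEnd {G : Type*} [Group G] (φ : G →* Multiplicative (ZMod 2)) {n : ℕ}
    (ρ : G → Matrix.GeneralLinearGroup (Fin n) ℂ) :
    Subalgebra ℝ (Matrix (Fin n) (Fin n) ℂ) where
  carrier := {T | ∀ g : G, T * (ρ g : Matrix (Fin n) (Fin n) ℂ) =
      (ρ g : Matrix (Fin n) (Fin n) ℂ) * sigmaPow (φ g) T}
  mul_mem' := by
    intro T S hT hS g
    rw [mul_assoc, hS g, ← mul_assoc, hT g, mul_assoc, sigmaPow_mul]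
  add_mem' := by
    intro T S hT hS g
    rw [add_mul, hT g, hS g, sigmaPow_add, mul_add]
  algebraMap_mem' := by
    intro r g
    have hσ : sigmaPow (φ g) (algebraMap ℝ (Matrix (Fin n) (Fin n) ℂ) r) =
        algebraMap ℝ (Matrix (Fin n) (Fin n) ℂ) r := by
      unfold sigmaPow conjMat
      split
      · rfl
      · ext i j
        simp [Matrix.algebraMap_matrix_apply, apply_ite (starRingEnd ℂ)]
    rw [hσ, Algebra.commutes]

/-- `(n+n) × (n+n)` block matrix built out of four `n × n` blocks. -/
def blocks {n : ℕ} (A B C D : Matrix (Fin n) (Fin n) ℂ) :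
    Matrix (Fin (n + n)) (Fin (n + n)) ℂ :=
  Matrix.reindex finSumFinEquiv finSumFinEquiv (Matrix.fromBlocks A B C D)

/-- The matrix of the inclusion `ℂⁿ → ℂ^{n+n}` of the first block. -/
def iotaMat (n : ℕ) : Matrix (Fin (n + n)) (Fin n) ℂ :=
  Matrix.reindex finSumFinEquiv (Equiv.refl (Fin n))
    (Matrix.fromRows (1 : Matrix (Fin n) (Fin n) ℂ) (0 : Matrix (Fin n) (Fin n) ℂ))


/-- The mod-2 reduction `ℤ/(2n) → ℤ/2`, written multiplicatively. -/
def modTwoHom (n : ℕ) : Multiplicative (ZMod (2 * n)) →* Multiplicative (ZMod 2) :=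
  AddMonoidHom.toMultiplicative ((ZMod.castHom (dvd_mul_right 2 n) (ZMod 2)).toAddMonoidHom)

namespace Stmt1Aux

variable {m : ℕ}

theorem conjGL_coe (A : Matrix.GeneralLinearGroup (Fin m) ℂ) :
    (conjGL A : Matrix (Fin m) (Fin m) ℂ) = conjMat (A : Matrix (Fin m) (Fin m) ℂ) := rfl

theorem conjMat_one : conjMat (1 : Matrix (Fin m) (Fin m) ℂ) = 1 := by
  ext i j
  simp [conjMat, Matrix.one_apply, apply_ite (starRingEnd ℂ)]

theorem conjMat_conjMat' {k : ℕ} (M : Matrix (Fin m) (Fin k) ℂ) : conjMat (conjMat M) = M := by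
  ext i j; simp [conjMat]

theorem conjMat_pow (M : Matrix (Fin m) (Fin m) ℂ) (k : ℕ) :
    conjMat (M ^ k) = conjMat M ^ k := by
  induction k with
  | zero => simpa using conjMat_one
  | succ k ih => rw [pow_succ, conjMat_mul, ih, pow_succ]

def magM (A : Matrix.GeneralLinearGroup (Fin m) ℂ) (k : ℕ) :
    Matrix.GeneralLinearGroup (Fin m) ℂ :=
  (A * conjGL A) ^ (k / 2) * A ^ (k % 2)

theorem magM_coe (A : Matrix.GeneralLinearGroup (Fin m) ℂ) (k : ℕ) :
    (magM A k : Matrix (Fin m) (Fin m) ℂ) =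
      ((A : Matrix (Fin m) (Fin m) ℂ) * conjMat (A : Matrix (Fin m) (Fin m) ℂ)) ^ (k / 2) *
        (A : Matrix (Fin m) (Fin m) ℂ) ^ (k % 2) := by
  simp [magM, Units.val_mul, Units.val_pow_eq_pow_val, conjGL_coe]

theorem magM_coe_add (A : Matrix.GeneralLinearGroup (Fin m) ℂ) (j k : ℕ) :
    (magM A (j + k) : Matrix (Fin m) (Fin m) ℂ) =
      (magM A j : Matrix (Fin m) (Fin m) ℂ) *
        (if j % 2 = 0 then (magM A k : Matrix (Fin m) (Fin m) ℂ)
          else conjMat (magM A k : Matrix (Fin m) (Fin m) ℂ)) := by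
  have hsc : ∀ t : ℕ, (A : Matrix (Fin m) (Fin m) ℂ) *
      (conjMat (A : Matrix (Fin m) (Fin m) ℂ) * (A : Matrix (Fin m) (Fin m) ℂ)) ^ t =
      ((A : Matrix (Fin m) (Fin m) ℂ) * conjMat (A : Matrix (Fin m) (Fin m) ℂ)) ^ t *
        (A : Matrix (Fin m) (Fin m) ℂ) := by
    intro t
    have h : SemiconjBy (A : Matrix (Fin m) (Fin m) ℂ)
        (conjMat (A : Matrix (Fin m) (Fin m) ℂ) * (A : Matrix (Fin m) (Fin m) ℂ))
        ((A : Matrix (Fin m) (Fin m) ℂ) * conjMat (A : Matrix (Fin m) (Fin m) ℂ)) := by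
      simp [SemiconjBy, mul_assoc]
    exact (h.pow_right t).eq
  have hconjB : ∀ t : ℕ,
      conjMat (((A : Matrix (Fin m) (Fin m) ℂ) * conjMat (A : Matrix (Fin m) (Fin m) ℂ)) ^ t) =
        (conjMat (A : Matrix (Fin m) (Fin m) ℂ) * (A : Matrix (Fin m) (Fin m) ℂ)) ^ t := by
    intro t
    rw [conjMat_pow, conjMat_mul, conjMat_conjMat']
  rcases Nat.mod_two_eq_zero_or_one j with hj | hj
  · have h1 : (j + k) / 2 = j / 2 + k / 2 := by omega
    have h2 : (j + k) % 2 = k % 2 := by omega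
    rw [if_pos hj]
    rw [magM_coe, magM_coe, magM_coe, h1, h2, hj, pow_add, pow_zero, mul_one, mul_assoc]
  · rw [if_neg (by omega)]
    rcases Nat.mod_two_eq_zero_or_one k with hk | hk
    · have h1 : (j + k) / 2 = j / 2 + k / 2 := by omega
      have h2 : (j + k) % 2 = 1 := by omega
      rw [magM_coe, magM_coe, magM_coe, h1, h2, hj, hk, pow_one, pow_zero, mul_one,
        hconjB, pow_add]
      rw [mul_assoc _ (A : Matrix (Fin m) (Fin m) ℂ), hsc, ← mul_assoc]
    · have h1 : (j + k) / 2 = j / 2 + k / 2 + 1 := by omega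
      have h2 : (j + k) % 2 = 0 := by omega
      rw [magM_coe, magM_coe, magM_coe, h1, h2, hj, hk, pow_one, pow_zero, mul_one,
        conjMat_mul, hconjB, pow_succ, pow_add]
      simp only [← mul_assoc]
      rw [mul_assoc _ (A : Matrix (Fin m) (Fin m) ℂ)
        ((conjMat (A : Matrix (Fin m) (Fin m) ℂ) * (A : Matrix (Fin m) (Fin m) ℂ)) ^ (k / 2)),
        hsc]
      simp only [← mul_assoc]

theorem magM_coe_period (A : Matrix.GeneralLinearGroup (Fin m) ℂ) (n : ℕ)
    (hA : ((A : Matrix (Fin m) (Fin m) ℂ) * conjMat (A : Matrix (Fin m) (Fin m) ℂ)) ^ n = 1)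
    (k : ℕ) :
    (magM A (k + 2 * n) : Matrix (Fin m) (Fin m) ℂ) = magM A k := by
  have h1 : (k + 2 * n) / 2 = k / 2 + n := by omega
  have h2 : (k + 2 * n) % 2 = k % 2 := by omega
  rw [magM_coe, magM_coe, h1, h2, pow_add, hA, mul_one]

theorem magM_coe_mod (A : Matrix.GeneralLinearGroup (Fin m) ℂ) {n : ℕ}
    (hA : ((A : Matrix (Fin m) (Fin m) ℂ) * conjMat (A : Matrix (Fin m) (Fin m) ℂ)) ^ n = 1)
    (k : ℕ) :
    (magM A k : Matrix (Fin m) (Fin m) ℂ) = magM A (k % (2 * n)) := by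
  have key : ∀ q r : ℕ, (magM A (r + 2 * n * q) : Matrix (Fin m) (Fin m) ℂ) = magM A r := by
    intro q
    induction q with
    | zero => intro r; simp
    | succ q ih =>
      intro r
      have h : r + 2 * n * (q + 1) = (r + 2 * n * q) + 2 * n := by ring
      rw [h, magM_coe_period A n hA, ih]
  conv_lhs => rw [show k = k % (2 * n) + 2 * n * (k / (2 * n)) from (Nat.mod_add_div k (2 * n)).symm]
  exact key _ _

theorem sigmaPow_natCast {a b : ℕ} (v : ℕ) (X : Matrix (Fin a) (Fin b) ℂ) :
    sigmaPow (Multiplicative.ofAdd ((v : ZMod 2))) X =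
      if v % 2 = 0 then X else conjMat X := by
  have h : ((v : ZMod 2)) = ((v % 2 : ℕ) : ZMod 2) := (ZMod.natCast_mod v 2).symm
  rcases Nat.mod_two_eq_zero_or_one v with hv | hv
  · rw [if_pos hv]
    unfold sigmaPow
    rw [if_pos (by rw [h, hv]; decide)]
  · rw [if_neg (by omega)]
    unfold sigmaPow
    rw [if_neg (by rw [h, hv]; decide)]

theorem modTwoHom_apply {n : ℕ} [NeZero (2 * n)] (g : Multiplicative (ZMod (2 * n))) :
    modTwoHom n g = Multiplicative.ofAdd (((Multiplicative.toAdd g).val : ZMod 2)) := by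
  have h : modTwoHom n g =
      Multiplicative.ofAdd
        (ZMod.castHom (dvd_mul_right 2 n) (ZMod 2) (Multiplicative.toAdd g)) := rfl
  rw [h, ZMod.castHom_apply, ← ZMod.natCast_val]

theorem isMagneticRep_magM {n : ℕ} (hn : 1 ≤ n) (A : Matrix.GeneralLinearGroup (Fin m) ℂ)
    (hA : ((A : Matrix (Fin m) (Fin m) ℂ) * conjMat (A : Matrix (Fin m) (Fin m) ℂ)) ^ n = 1) :
    IsMagneticRep (modTwoHom n) (fun g => magM A (Multiplicative.toAdd g).val) := by
  haveI : NeZero (2 * n) := ⟨by omega⟩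
  intro g h
  show (magM A (Multiplicative.toAdd (g * h)).val : Matrix (Fin m) (Fin m) ℂ) = _
  rw [toAdd_mul, ZMod.val_add, ← magM_coe_mod A hA, magM_coe_add, modTwoHom_apply,
    sigmaPow_natCast]

theorem rep_one {n : ℕ} (ρ : Multiplicative (ZMod (2 * n)) → Matrix.GeneralLinearGroup (Fin m) ℂ)
    (hρ : IsMagneticRep (modTwoHom n) ρ) :
    (ρ 1 : Matrix (Fin m) (Fin m) ℂ) = 1 := by
  have e := hρ 1 1
  rw [mul_one, _root_.map_one] at e
  simp only [sigmaPow, if_pos rfl] at e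
  have eu : ρ 1 * ρ 1 = ρ 1 * 1 := by
    apply Units.ext
    rw [Units.val_mul, mul_one]
    exact e.symm
  have h1 : ρ 1 = 1 := mul_left_cancel eu
  rw [h1, Units.val_one]

end Stmt1Aux

theorem stmt1 (n m : ℕ) (hn : 1 ≤ n) (hm : 1 ≤ m) :
    Set.BijOn
      (fun ρ : Multiplicative (ZMod (2 * n)) → Matrix.GeneralLinearGroup (Fin m) ℂ =>
        ρ (Multiplicative.ofAdd 1))
      {ρ | IsMagneticRep (modTwoHom n) ρ}
      {A : Matrix.GeneralLinearGroup (Fin m) ℂ |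
        ((A : Matrix (Fin m) (Fin m) ℂ) * conjMat (A : Matrix (Fin m) (Fin m) ℂ)) ^ n = 1} := by
  haveI : NeZero (2 * n) := ⟨by omega⟩
  haveI : Fact (1 < 2 * n) := ⟨by omega⟩
  set g1 : Multiplicative (ZMod (2 * n)) := Multiplicative.ofAdd 1 with hg1
  have hpow : ∀ k : ℕ, g1 ^ k = Multiplicative.ofAdd ((k : ZMod (2 * n))) := by
    intro k
    rw [hg1, ← ofAdd_nsmul]
    congr 1
    simp [nsmul_eq_mul]
  have hval1 : (Multiplicative.toAdd g1).val = 1 := by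
    rw [hg1]
    exact ZMod.val_one _
  have hφ1 : modTwoHom n g1 = Multiplicative.ofAdd ((1 : ZMod 2)) := by
    rw [Stmt1Aux.modTwoHom_apply, hval1]
    norm_num
  refine ⟨?_, ?_, ?_⟩
  · -- MapsTo
    intro ρ hρ
    simp only [Set.mem_setOf_eq] at hρ ⊢
    have h1 : (ρ 1 : Matrix (Fin m) (Fin m) ℂ) = 1 := Stmt1Aux.rep_one ρ hρ
    have hφ1sq : modTwoHom n g1 * modTwoHom n g1 = 1 := by rw [hφ1]; decide
    have hσ1 : ∀ X : Matrix (Fin m) (Fin m) ℂ, sigmaPow (modTwoHom n g1) X = conjMat X := by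
      intro X
      rw [hφ1]
      unfold sigmaPow
      rw [if_neg (by decide)]
    have claim : ∀ k : ℕ, (ρ (g1 ^ (2 * k)) : Matrix (Fin m) (Fin m) ℂ) =
        ((ρ g1 : Matrix (Fin m) (Fin m) ℂ) * conjMat (ρ g1 : Matrix (Fin m) (Fin m) ℂ)) ^ k := by
      intro k
      induction k with
      | zero => simpa using h1
      | succ k ih =>
        have hφeven : modTwoHom n (g1 ^ (2 * k)) = 1 := by
          rw [map_pow, pow_mul, pow_two, hφ1sq, one_pow]
        have hσid : ∀ X : Matrix (Fin m) (Fin m) ℂ,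
            sigmaPow (1 : Multiplicative (ZMod 2)) X = X := fun X => if_pos rfl
        have e1 := hρ (g1 ^ (2 * k)) g1
        rw [hφeven, hσid] at e1
        have e2 := hρ (g1 ^ (2 * k) * g1) g1
        have hφodd : modTwoHom n (g1 ^ (2 * k) * g1) = modTwoHom n g1 := by
          rw [_root_.map_mul, hφeven, one_mul]
        rw [hφodd, hσ1] at e2
        have hpow2 : g1 ^ (2 * k) * g1 * g1 = g1 ^ (2 * (k + 1)) := by
          rw [show 2 * (k + 1) = 2 * k + 1 + 1 by ring, pow_succ, pow_succ]
        calc (ρ (g1 ^ (2 * (k + 1))) : Matrix (Fin m) (Fin m) ℂ)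
            = (ρ (g1 ^ (2 * k) * g1 * g1) : Matrix (Fin m) (Fin m) ℂ) := by rw [hpow2]
          _ = (ρ (g1 ^ (2 * k) * g1) : Matrix (Fin m) (Fin m) ℂ) *
                conjMat (ρ g1 : Matrix (Fin m) (Fin m) ℂ) := e2
          _ = (ρ (g1 ^ (2 * k)) : Matrix (Fin m) (Fin m) ℂ) *
                (ρ g1 : Matrix (Fin m) (Fin m) ℂ) *
                conjMat (ρ g1 : Matrix (Fin m) (Fin m) ℂ) := by rw [e1]
          _ = _ := by rw [ih, pow_succ, mul_assoc]
    have h2n : g1 ^ (2 * n) = 1 := by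
      rw [hpow]
      simp
    have hc := claim n
    rw [h2n, h1] at hc
    exact hc.symm
  · -- InjOn
    intro ρ hρ ρ' hρ' hval
    simp only [Set.mem_setOf_eq] at hρ hρ'
    simp only at hval
    funext g
    have key : ∀ k : ℕ, ρ (g1 ^ k) = ρ' (g1 ^ k) := by
      intro k
      induction k with
      | zero =>
        apply Units.ext
        rw [pow_zero, Stmt1Aux.rep_one ρ hρ, Stmt1Aux.rep_one ρ' hρ']
      | succ k ih =>
        apply Units.ext
        rw [pow_succ, hρ (g1 ^ k) g1, hρ' (g1 ^ k) g1, ih, hval]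
    have hg : g = g1 ^ (Multiplicative.toAdd g).val := by
      rw [hpow, ZMod.natCast_val, ZMod.cast_id, ofAdd_toAdd]
    rw [hg, key]
  · -- SurjOn
    intro A hA
    simp only [Set.mem_setOf_eq] at hA
    refine ⟨fun g => Stmt1Aux.magM A (Multiplicative.toAdd g).val,
      Stmt1Aux.isMagneticRep_magM hn A hA, ?_⟩
    simp only
    apply Units.ext
    rw [hval1, Stmt1Aux.magM_coe]
    norm_num
end
end

section
/- Let G be a finite group, φ : G → ℤ/2 a surjective group homomorphism with kernel G₀, a ∈ G ∖ G₀, and ρ : G₀ → GL(n, ℂ) a group homomorphism, with conjugate representation ρ*(g) = σ(ρ(a⁻¹ g a)). Then there exists a (unique) magnetic representation ρ̃ of (G, φ) on ℂ^{2n} such that ρ̃(g) is the block-diagonal matrix diag(ρ(g), ρ*(g)) for every g ∈ G₀ and ρ̃(a) is the block matrix [[0, ρ(a²)], [I, 0]]. -/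
open Matrix

noncomputable section

theorem blocks_mul {n : ℕ} (A B C D A' B' C' D' : Matrix (Fin n) (Fin n) ℂ) :
    blocks A B C D * blocks A' B' C' D' =
      blocks (A*A' + B*C') (A*B' + B*D') (C*A' + D*C') (C*B' + D*D') := by
  unfold blocks
  rw [Matrix.reindex_apply, Matrix.reindex_apply, Matrix.reindex_apply,
    Matrix.submatrix_mul_equiv, Matrix.fromBlocks_multiply]

theorem blocks_one {n : ℕ} : blocks (1 : Matrix (Fin n) (Fin n) ℂ) 0 0 1 = 1 := by
  unfold blocks
  rw [Matrix.fromBlocks_one]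
  simp

theorem conjMat_blocks {n : ℕ} (A B C D : Matrix (Fin n) (Fin n) ℂ) :
    conjMat (blocks A B C D) = blocks (conjMat A) (conjMat B) (conjMat C) (conjMat D) := by
  simp only [blocks, conjMat, Matrix.reindex_apply]
  rw [← Matrix.submatrix_map, Matrix.fromBlocks_map]

theorem conjMat_conjMat {m n : ℕ} (M : Matrix (Fin m) (Fin n) ℂ) : conjMat (conjMat M) = M := by
  ext i j; simp [conjMat]

theorem conjMat_one {n : ℕ} : conjMat (1 : Matrix (Fin n) (Fin n) ℂ) = 1 := by
  ext i j; simp [conjMat, Matrix.one_apply, apply_ite (starRingEnd ℂ)]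

theorem conjMat_zero {m n : ℕ} : conjMat (0 : Matrix (Fin m) (Fin n) ℂ) = 0 := by
  ext i j; simp [conjMat]

theorem conjGL_val {n : ℕ} (A : Matrix.GeneralLinearGroup (Fin n) ℂ) :
    (conjGL A : Matrix (Fin n) (Fin n) ℂ) = conjMat (A : Matrix (Fin n) (Fin n) ℂ) := rfl

theorem kerConj_mul {G : Type*} [Group G] (φ : G →* Multiplicative (ZMod 2)) (a : G)
    (g h : φ.ker) : kerConj φ a (g * h) = kerConj φ a g * kerConj φ a h := by
  apply Subtype.ext
  show a⁻¹ * (↑g * ↑h) * a = (a⁻¹ * ↑g * a) * (a⁻¹ * ↑h * a)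
  group

theorem kerConj_one {G : Type*} [Group G] (φ : G →* Multiplicative (ZMod 2)) (a : G) :
    kerConj φ a (1 : φ.ker) = 1 := by
  apply Subtype.ext
  show a⁻¹ * (1 : G) * a = 1
  group

/-- diag(ρ g, σ(ρ(a⁻¹ g a))) as a matrix. -/
def Dmat {G : Type*} [Group G] (φ : G →* Multiplicative (ZMod 2)) (a : G) {n : ℕ}
    (ρ : φ.ker →* Matrix.GeneralLinearGroup (Fin n) ℂ) (g : φ.ker) :
    Matrix (Fin (n + n)) (Fin (n + n)) ℂ :=
  blocks (ρ g : Matrix (Fin n) (Fin n) ℂ) 0 0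
    (conjMat (ρ (kerConj φ a g) : Matrix (Fin n) (Fin n) ℂ))

theorem Dmat_mul {G : Type*} [Group G] (φ : G →* Multiplicative (ZMod 2)) (a : G) {n : ℕ}
    (ρ : φ.ker →* Matrix.GeneralLinearGroup (Fin n) ℂ) (g h : φ.ker) :
    Dmat φ a ρ (g * h) = Dmat φ a ρ g * Dmat φ a ρ h := by
  unfold Dmat
  rw [blocks_mul, kerConj_mul, _root_.map_mul ρ, _root_.map_mul ρ, Units.val_mul, Units.val_mul, conjMat_mul]
  simp

theorem Dmat_one {G : Type*} [Group G] (φ : G →* Multiplicative (ZMod 2)) (a : G) {n : ℕ}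
    (ρ : φ.ker →* Matrix.GeneralLinearGroup (Fin n) ℂ) :
    Dmat φ a ρ (1 : φ.ker) = 1 := by
  unfold Dmat
  rw [kerConj_one, _root_.map_one ρ, Units.val_one, conjMat_one, blocks_one]

/-- The block-diagonal part as an invertible matrix. -/
def DGL {G : Type*} [Group G] (φ : G →* Multiplicative (ZMod 2)) (a : G) {n : ℕ}
    (ρ : φ.ker →* Matrix.GeneralLinearGroup (Fin n) ℂ) (g : φ.ker) :
    Matrix.GeneralLinearGroup (Fin (n + n)) ℂ where
  val := Dmat φ a ρ g
  inv := Dmat φ a ρ g⁻¹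
  val_inv := by rw [← Dmat_mul, mul_inv_cancel, Dmat_one]
  inv_val := by rw [← Dmat_mul, inv_mul_cancel, Dmat_one]

/-- The matrix assigned to `a`. -/
def Amat {G : Type*} [Group G] (φ : G →* Multiplicative (ZMod 2)) (a : G) {n : ℕ}
    (ρ : φ.ker →* Matrix.GeneralLinearGroup (Fin n) ℂ) :
    Matrix (Fin (n + n)) (Fin (n + n)) ℂ :=
  blocks 0 (ρ ⟨a * a, sq_mem φ a⟩ : Matrix (Fin n) (Fin n) ℂ) 1 0

/-- `Amat` as an invertible matrix. -/
def AGL {G : Type*} [Group G] (φ : G →* Multiplicative (ZMod 2)) (a : G) {n : ℕ}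
    (ρ : φ.ker →* Matrix.GeneralLinearGroup (Fin n) ℂ) :
    Matrix.GeneralLinearGroup (Fin (n + n)) ℂ where
  val := Amat φ a ρ
  inv := blocks 0 1 ((ρ ⟨a * a, sq_mem φ a⟩)⁻¹ : Matrix.GeneralLinearGroup (Fin n) ℂ) 0
  val_inv := by
    unfold Amat
    rw [blocks_mul]
    simp only [zero_mul, mul_zero, add_zero, zero_add, one_mul, mul_one,
      Units.mul_inv, Units.inv_mul]
    exact blocks_one
  inv_val := by
    unfold Amat
    rw [blocks_mul]
    simp only [zero_mul, mul_zero, add_zero, zero_add, one_mul, mul_one,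
      Units.mul_inv, Units.inv_mul]
    exact blocks_one

theorem sigmaPow_one {m n : ℕ} (M : Matrix (Fin m) (Fin n) ℂ) : sigmaPow 1 M = M := if_pos rfl

theorem exch {G : Type*} [Group G] (φ : G →* Multiplicative (ZMod 2)) (a : G) {n : ℕ}
    (ρ : φ.ker →* Matrix.GeneralLinearGroup (Fin n) ℂ) (k : φ.ker) :
    Amat φ a ρ * conjMat (Dmat φ a ρ k) = Dmat φ a ρ (kerConj φ a⁻¹ k) * Amat φ a ρ := by
  unfold Amat Dmat
  rw [conjMat_blocks, conjMat_zero, conjMat_conjMat, blocks_mul, blocks_mul]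
  simp only [zero_mul, mul_zero, add_zero, zero_add, one_mul, mul_one]
  have e1 : (⟨a * a, sq_mem φ a⟩ : φ.ker) * kerConj φ a k = kerConj φ a⁻¹ k * ⟨a * a, sq_mem φ a⟩ :=
    Subtype.ext (by show (a * a) * (a⁻¹ * ↑k * a) = ((a⁻¹)⁻¹ * ↑k * a⁻¹) * (a * a); group)
  have e2 : kerConj φ a (kerConj φ a⁻¹ k) = k :=
    Subtype.ext (by show a⁻¹ * ((a⁻¹)⁻¹ * ↑k * a⁻¹) * a = (k : G); group)
  rw [← Units.val_mul, ← Units.val_mul, ← _root_.map_mul ρ, ← _root_.map_mul ρ, e1, e2]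

theorem AA {G : Type*} [Group G] (φ : G →* Multiplicative (ZMod 2)) (a : G) {n : ℕ}
    (ρ : φ.ker →* Matrix.GeneralLinearGroup (Fin n) ℂ) :
    Amat φ a ρ * conjMat (Amat φ a ρ) = Dmat φ a ρ ⟨a * a, sq_mem φ a⟩ := by
  unfold Amat Dmat
  rw [conjMat_blocks, conjMat_zero, conjMat_one, blocks_mul]
  simp only [zero_mul, mul_zero, add_zero, zero_add, one_mul, mul_one]
  have e : kerConj φ a ⟨a * a, sq_mem φ a⟩ = ⟨a * a, sq_mem φ a⟩ :=
    Subtype.ext (by show a⁻¹ * (a * a) * a = a * a; group)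
  rw [e]

theorem case3aux {G : Type*} [Group G] (φ : G →* Multiplicative (ZMod 2)) (a : G) {n : ℕ}
    (ρ : φ.ker →* Matrix.GeneralLinearGroup (Fin n) ℂ) (k l : φ.ker) :
    (Dmat φ a ρ k * Amat φ a ρ) * conjMat (Dmat φ a ρ l) =
      Dmat φ a ρ (k * kerConj φ a⁻¹ l) * Amat φ a ρ := by
  rw [mul_assoc, exch, ← mul_assoc, ← Dmat_mul]

theorem case4aux {G : Type*} [Group G] (φ : G →* Multiplicative (ZMod 2)) (a : G) {n : ℕ}
    (ρ : φ.ker →* Matrix.GeneralLinearGroup (Fin n) ℂ) (k l : φ.ker) :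
    (Dmat φ a ρ k * Amat φ a ρ) * conjMat (Dmat φ a ρ l * Amat φ a ρ) =
      Dmat φ a ρ (k * (kerConj φ a⁻¹ l * ⟨a * a, sq_mem φ a⟩)) := by
  rw [conjMat_mul, mul_assoc, ← mul_assoc (Amat φ a ρ), exch, mul_assoc, AA,
    ← Dmat_mul, ← Dmat_mul]

theorem mul_inv_mem {G : Type*} [Group G] {φ : G →* Multiplicative (ZMod 2)} {a g : G}
    (ha : a ∉ φ.ker) (hg : g ∉ φ.ker) : g * a⁻¹ ∈ φ.ker := by
  have key : ∀ x y : Multiplicative (ZMod 2), x ≠ 1 → y ≠ 1 → x * y⁻¹ = 1 := by decide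
  rw [MonoidHom.mem_ker] at ha hg ⊢
  rw [_root_.map_mul φ, map_inv φ]
  exact key _ _ hg ha

theorem mul_mem_ker {G : Type*} [Group G] {φ : G →* Multiplicative (ZMod 2)} {g h : G}
    (hg : g ∉ φ.ker) (hh : h ∉ φ.ker) : g * h ∈ φ.ker := by
  have key : ∀ x y : Multiplicative (ZMod 2), x ≠ 1 → y ≠ 1 → x * y = 1 := by decide
  rw [MonoidHom.mem_ker] at hg hh ⊢
  rw [_root_.map_mul φ]
  exact key _ _ hg hh

open scoped Classical in
/-- The induced magnetic representation. -/
def rtF {G : Type*} [Group G] (φ : G →* Multiplicative (ZMod 2)) (a : G) (ha : a ∉ φ.ker)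
    {n : ℕ} (ρ : φ.ker →* Matrix.GeneralLinearGroup (Fin n) ℂ) (g : G) :
    Matrix.GeneralLinearGroup (Fin (n + n)) ℂ :=
  if h : g ∈ φ.ker then DGL φ a ρ ⟨g, h⟩
  else DGL φ a ρ ⟨g * a⁻¹, mul_inv_mem ha h⟩ * AGL φ a ρ

theorem rtF_mem {G : Type*} [Group G] (φ : G →* Multiplicative (ZMod 2)) (a : G) (ha : a ∉ φ.ker)
    {n : ℕ} (ρ : φ.ker →* Matrix.GeneralLinearGroup (Fin n) ℂ) {g : G} (hg : g ∈ φ.ker) :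
    (rtF φ a ha ρ g : Matrix (Fin (n + n)) (Fin (n + n)) ℂ) = Dmat φ a ρ ⟨g, hg⟩ := by
  unfold rtF
  rw [dif_pos hg]
  rfl

theorem rtF_not_mem {G : Type*} [Group G] (φ : G →* Multiplicative (ZMod 2)) (a : G)
    (ha : a ∉ φ.ker) {n : ℕ} (ρ : φ.ker →* Matrix.GeneralLinearGroup (Fin n) ℂ) {g : G}
    (hg : g ∉ φ.ker) :
    (rtF φ a ha ρ g : Matrix (Fin (n + n)) (Fin (n + n)) ℂ) =
      Dmat φ a ρ ⟨g * a⁻¹, mul_inv_mem ha hg⟩ * Amat φ a ρ := by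
  unfold rtF
  rw [dif_neg hg]
  rfl

theorem stmt5 {G : Type*} [Group G] [Finite G]
    (φ : G →* Multiplicative (ZMod 2)) (hφ : Function.Surjective φ)
    (a : G) (ha : a ∉ φ.ker) (n : ℕ)
    (ρ : φ.ker →* Matrix.GeneralLinearGroup (Fin n) ℂ) :
    ∃! ρt : G → Matrix.GeneralLinearGroup (Fin (n + n)) ℂ,
      IsMagneticRep φ ρt ∧
      (∀ g : φ.ker, (ρt g : Matrix (Fin (n + n)) (Fin (n + n)) ℂ) =
        blocks (ρ g : Matrix (Fin n) (Fin n) ℂ) 0 0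
          (conjMat (ρ (kerConj φ a g) : Matrix (Fin n) (Fin n) ℂ))) ∧
      (ρt a : Matrix (Fin (n + n)) (Fin (n + n)) ℂ) =
        blocks 0 (ρ ⟨a * a, sq_mem φ a⟩ : Matrix (Fin n) (Fin n) ℂ) 1 0 := by
  have sig_one : ∀ {g : G}, g ∈ φ.ker → ∀ (M : Matrix (Fin (n+n)) (Fin (n+n)) ℂ),
      sigmaPow (φ g) M = M := by
    intro g hg M
    rw [MonoidHom.mem_ker] at hg
    rw [hg, sigmaPow_one]
  have sig_conj : ∀ {g : G}, g ∉ φ.ker → ∀ (M : Matrix (Fin (n+n)) (Fin (n+n)) ℂ),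
      sigmaPow (φ g) M = conjMat M := by
    intro g hg M
    rw [MonoidHom.mem_ker] at hg
    exact if_neg hg
  refine ⟨rtF φ a ha ρ, ⟨?_, ?_, ?_⟩, ?_⟩
  · -- magnetic representation property
    intro g h
    by_cases hg : g ∈ φ.ker <;> by_cases hh : h ∈ φ.ker
    · have hgh : g * h ∈ φ.ker := mul_mem hg hh
      rw [rtF_mem φ a ha ρ hgh, rtF_mem φ a ha ρ hg, rtF_mem φ a ha ρ hh, sig_one hg,
        show (⟨g * h, hgh⟩ : φ.ker) = ⟨g, hg⟩ * ⟨h, hh⟩ from Subtype.ext rfl, Dmat_mul]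
    · have hgh : g * h ∉ φ.ker := fun m => hh (by simpa using mul_mem (inv_mem hg) m)
      rw [rtF_not_mem φ a ha ρ hgh, rtF_not_mem φ a ha ρ hh, rtF_mem φ a ha ρ hg, sig_one hg,
        show (⟨g * h * a⁻¹, mul_inv_mem ha hgh⟩ : φ.ker) =
          ⟨g, hg⟩ * ⟨h * a⁻¹, mul_inv_mem ha hh⟩ from Subtype.ext (by show g*h*a⁻¹ = g*(h*a⁻¹); group),
        Dmat_mul, mul_assoc]
    · have hgh : g * h ∉ φ.ker := fun m => hg (by simpa using mul_mem m (inv_mem hh))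
      rw [rtF_not_mem φ a ha ρ hgh, rtF_not_mem φ a ha ρ hg, rtF_mem φ a ha ρ hh, sig_conj hg,
        case3aux φ a ρ,
        show (⟨g * h * a⁻¹, mul_inv_mem ha hgh⟩ : φ.ker) =
          ⟨g * a⁻¹, mul_inv_mem ha hg⟩ * kerConj φ a⁻¹ ⟨h, hh⟩ from
          Subtype.ext (by show g*h*a⁻¹ = (g*a⁻¹)*((a⁻¹)⁻¹*h*a⁻¹); group)]
    · have hgh : g * h ∈ φ.ker := mul_mem_ker hg hh
      rw [rtF_mem φ a ha ρ hgh, rtF_not_mem φ a ha ρ hg, rtF_not_mem φ a ha ρ hh, sig_conj hg,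
        case4aux φ a ρ,
        show (⟨g * h, hgh⟩ : φ.ker) =
          ⟨g * a⁻¹, mul_inv_mem ha hg⟩ * (kerConj φ a⁻¹ ⟨h * a⁻¹, mul_inv_mem ha hh⟩ *
            ⟨a * a, sq_mem φ a⟩) from
          Subtype.ext (by show g*h = (g*a⁻¹)*(((a⁻¹)⁻¹*(h*a⁻¹)*a⁻¹)*(a*a)); group)]
  · -- value on the kernel
    intro g
    rw [rtF_mem φ a ha ρ g.2]
    rfl
  · -- value at a
    rw [rtF_not_mem φ a ha ρ ha,
      show (⟨a * a⁻¹, mul_inv_mem ha ha⟩ : φ.ker) = 1 from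
        Subtype.ext (by show a * a⁻¹ = 1; group),
      Dmat_one, one_mul]
    rfl
  · -- uniqueness
    intro ρt' ⟨h1, h2, h3⟩
    funext g
    apply Units.ext
    by_cases hg : g ∈ φ.ker
    · rw [rtF_mem φ a ha ρ hg]
      exact h2 ⟨g, hg⟩
    · calc (ρt' g : Matrix (Fin (n+n)) (Fin (n+n)) ℂ)
          = (ρt' ((g * a⁻¹) * a) : Matrix (Fin (n+n)) (Fin (n+n)) ℂ) := by
            rw [show (g * a⁻¹) * a = g from by group]
        _ = (ρt' (g * a⁻¹) : Matrix (Fin (n+n)) (Fin (n+n)) ℂ) *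
            sigmaPow (φ (g * a⁻¹)) (ρt' a : Matrix (Fin (n+n)) (Fin (n+n)) ℂ) := h1 _ _
        _ = Dmat φ a ρ ⟨g * a⁻¹, mul_inv_mem ha hg⟩ * Amat φ a ρ := by
            rw [sig_one (mul_inv_mem ha hg), h3]
            exact congrArg (· * Amat φ a ρ) (h2 ⟨g * a⁻¹, mul_inv_mem ha hg⟩)
        _ = (rtF φ a ha ρ g : Matrix (Fin (n+n)) (Fin (n+n)) ℂ) :=
            (rtF_not_mem φ a ha ρ hg).symm
end
end

section
/- (Maschke's theorem for magnetic groups.) Let (G, φ) be a finite magnetic group and ρ a magnetic representation of (G, φ) on ℂⁿ. If W ⊆ ℂⁿ is an invariant ℂ-linear subspace, then there exists an invariant ℂ-linear subspace W' ⊆ ℂⁿ such that ℂⁿ is the internal direct sum of W and W' (i.e., W ∩ W' = 0 and W + W' = ℂⁿ). -/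
open Matrix

noncomputable section

/-! ### Auxiliary lemmas for magnetic Maschke -/

/-- `σ^ε` on scalars. -/
def sconj (ε : Multiplicative (ZMod 2)) (c : ℂ) : ℂ :=
  if ε = 1 then c else starRingEnd ℂ c

theorem sconj_sconj (ε : Multiplicative (ZMod 2)) (c : ℂ) : sconj ε (sconj ε c) = c := by
  unfold sconj; split <;> simp

theorem sconj_natInv (ε : Multiplicative (ZMod 2)) (m : ℕ) :
    sconj ε ((m : ℂ)⁻¹) = (m : ℂ)⁻¹ := by
  unfold sconj; split <;> simp [map_inv₀]

theorem sigmaPowVec_add' {n : ℕ} (ε : Multiplicative (ZMod 2)) (v w : Fin n → ℂ) :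
    sigmaPowVec ε (v + w) = sigmaPowVec ε v + sigmaPowVec ε w := by
  unfold sigmaPowVec conjVec
  split
  · rfl
  · ext i; simp

theorem sigmaPowVec_zero' {n : ℕ} (ε : Multiplicative (ZMod 2)) :
    sigmaPowVec ε (0 : Fin n → ℂ) = 0 := by
  unfold sigmaPowVec conjVec
  split
  · rfl
  · ext i; simp

theorem sigmaPowVec_smul' {n : ℕ} (ε : Multiplicative (ZMod 2)) (c : ℂ) (v : Fin n → ℂ) :
    sigmaPowVec ε (c • v) = sconj ε c • sigmaPowVec ε v := by
  unfold sigmaPowVec conjVec sconj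
  split
  · rfl
  · ext i; simp

theorem sigmaPowVec_mulVec {n : ℕ} (ε : Multiplicative (ZMod 2))
    (M : Matrix (Fin n) (Fin n) ℂ) (v : Fin n → ℂ) :
    sigmaPowVec ε (M *ᵥ v) = sigmaPow ε M *ᵥ sigmaPowVec ε v := by
  unfold sigmaPowVec sigmaPow conjVec conjMat
  split
  · rfl
  · ext i; simp [Matrix.mulVec, dotProduct, map_sum]

theorem sigmaPowVec_sigmaPowVec {n : ℕ} (ε ε' : Multiplicative (ZMod 2)) (v : Fin n → ℂ) :
    sigmaPowVec ε (sigmaPowVec ε' v) = sigmaPowVec (ε * ε') v := by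
  have hkey : ∀ a b : Multiplicative (ZMod 2), a ≠ 1 → b ≠ 1 → a * b = 1 := by decide
  unfold sigmaPowVec conjVec
  by_cases h : ε = 1 <;> by_cases h' : ε' = 1
  · simp [h, h']
  · simp [h, h']
  · simp [h, h']
  · rw [if_neg h, if_neg h', if_pos (hkey ε ε' h h')]
    ext i; simp

/-- The real-linear action of `g` on `ℂⁿ` given by a magnetic representation. -/
def magAct {G : Type*} [Group G] (φ : G →* Multiplicative (ZMod 2)) {n : ℕ}
    (ρ : G → Matrix.GeneralLinearGroup (Fin n) ℂ) (g : G) (v : Fin n → ℂ) : Fin n → ℂ :=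
  (ρ g : Matrix (Fin n) (Fin n) ℂ) *ᵥ sigmaPowVec (φ g) v

theorem magAct_add {G : Type*} [Group G] (φ : G →* Multiplicative (ZMod 2)) {n : ℕ}
    (ρ : G → Matrix.GeneralLinearGroup (Fin n) ℂ) (g : G) (v w : Fin n → ℂ) :
    magAct φ ρ g (v + w) = magAct φ ρ g v + magAct φ ρ g w := by
  unfold magAct
  rw [sigmaPowVec_add', Matrix.mulVec_add]

theorem magAct_zero {G : Type*} [Group G] (φ : G →* Multiplicative (ZMod 2)) {n : ℕ}
    (ρ : G → Matrix.GeneralLinearGroup (Fin n) ℂ) (g : G) :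
    magAct φ ρ g (0 : Fin n → ℂ) = 0 := by
  unfold magAct
  rw [sigmaPowVec_zero', Matrix.mulVec_zero]

theorem magAct_smul {G : Type*} [Group G] (φ : G →* Multiplicative (ZMod 2)) {n : ℕ}
    (ρ : G → Matrix.GeneralLinearGroup (Fin n) ℂ) (g : G) (c : ℂ) (v : Fin n → ℂ) :
    magAct φ ρ g (c • v) = sconj (φ g) c • magAct φ ρ g v := by
  unfold magAct
  rw [sigmaPowVec_smul', Matrix.mulVec_smul]

theorem magAct_mul {G : Type*} [Group G] (φ : G →* Multiplicative (ZMod 2)) {n : ℕ}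
    (ρ : G → Matrix.GeneralLinearGroup (Fin n) ℂ) (hρ : IsMagneticRep φ ρ) (g h : G)
    (v : Fin n → ℂ) :
    magAct φ ρ (g * h) v = magAct φ ρ g (magAct φ ρ h v) := by
  unfold magAct
  rw [sigmaPowVec_mulVec, sigmaPowVec_sigmaPowVec, Matrix.mulVec_mulVec, ← hρ g h,
    _root_.map_mul φ]

theorem magAct_one {G : Type*} [Group G] (φ : G →* Multiplicative (ZMod 2)) {n : ℕ}
    (ρ : G → Matrix.GeneralLinearGroup (Fin n) ℂ) (hρ : IsMagneticRep φ ρ)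
    (v : Fin n → ℂ) :
    magAct φ ρ 1 v = v := by
  have h1 : ρ 1 * ρ 1 = ρ 1 := by
    apply Units.ext
    have := hρ 1 1
    rw [one_mul, _root_.map_one φ] at this
    unfold sigmaPow at this
    rw [if_pos rfl] at this
    rw [Units.val_mul]
    exact this.symm
  have h2 : ρ 1 = 1 := mul_left_cancel (h1.trans (mul_one _).symm)
  unfold magAct
  rw [_root_.map_one φ]
  unfold sigmaPowVec
  rw [if_pos rfl, h2]
  simp

theorem magAct_inv_cancel {G : Type*} [Group G] (φ : G →* Multiplicative (ZMod 2)) {n : ℕ}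
    (ρ : G → Matrix.GeneralLinearGroup (Fin n) ℂ) (hρ : IsMagneticRep φ ρ) (g : G)
    (v : Fin n → ℂ) :
    magAct φ ρ g (magAct φ ρ g⁻¹ v) = v := by
  rw [← magAct_mul φ ρ hρ, mul_inv_cancel, magAct_one φ ρ hρ]

theorem stmt7 {G : Type*} [Group G] [Finite G]
    (φ : G →* Multiplicative (ZMod 2)) (hφ : Function.Surjective φ) {n : ℕ}
    (ρ : G → Matrix.GeneralLinearGroup (Fin n) ℂ) (hρ : IsMagneticRep φ ρ)
    (W : Submodule ℂ (Fin n → ℂ)) (hW : MagInvariant φ ρ W) :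
    ∃ W' : Submodule ℂ (Fin n → ℂ),
      MagInvariant φ ρ W' ∧ W ⊓ W' = ⊥ ∧ W ⊔ W' = ⊤ := by
  classical
  have : Fintype G := Fintype.ofFinite G
  -- a linear projection onto W
  obtain ⟨Wc, hWc⟩ := Submodule.exists_isCompl W
  set P : (Fin n → ℂ) →ₗ[ℂ] (Fin n → ℂ) :=
    W.subtype ∘ₗ (W.linearProjOfIsCompl Wc hWc) with hP
  have hPmem : ∀ v, P v ∈ W := fun v => (W.linearProjOfIsCompl Wc hWc v).2
  have hPW : ∀ w ∈ W, P w = w := by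
    intro w hw
    have h1 : W.linearProjOfIsCompl Wc hWc w = ⟨w, hw⟩ :=
      Submodule.linearProjOfIsCompl_apply_left hWc ⟨w, hw⟩
    simp [hP, h1]
  have hinv : ∀ x : Multiplicative (ZMod 2), x⁻¹ = x := by decide
  -- the averaged operator
  set c : ℂ := ((Fintype.card G : ℂ))⁻¹ with hc
  have hsconjc : ∀ ε, sconj ε c = c := fun ε => sconj_natInv ε _
  set E : G → (Fin n → ℂ) →ₗ[ℂ] (Fin n → ℂ) := fun g =>
    { toFun := fun v => magAct φ ρ g (P (magAct φ ρ g⁻¹ v))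
      map_add' := by
        intro v w
        show magAct φ ρ g (P (magAct φ ρ g⁻¹ (v + w))) =
          magAct φ ρ g (P (magAct φ ρ g⁻¹ v)) + magAct φ ρ g (P (magAct φ ρ g⁻¹ w))
        rw [magAct_add, map_add, magAct_add]
      map_smul' := by
        intro a v
        show magAct φ ρ g (P (magAct φ ρ g⁻¹ (a • v))) =
          (RingHom.id ℂ) a • magAct φ ρ g (P (magAct φ ρ g⁻¹ v))
        rw [magAct_smul, _root_.map_smul P, magAct_smul]
        have : φ g⁻¹ = φ g := by rw [map_inv, hinv]
        rw [this, sconj_sconj]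
        rfl } with hE
  set Q : (Fin n → ℂ) →ₗ[ℂ] (Fin n → ℂ) := c • ∑ g : G, E g with hQ
  have hQapp : ∀ v, Q v = c • ∑ g : G, magAct φ ρ g (P (magAct φ ρ g⁻¹ v)) := by
    intro v
    simp [hQ, hE, LinearMap.sum_apply]
  have hQmem : ∀ v, Q v ∈ W := by
    intro v
    rw [hQapp]
    refine W.smul_mem c (Submodule.sum_mem W fun g _ => ?_)
    exact hW g _ (hPmem _)
  have hcard : (Fintype.card G : ℂ) ≠ 0 := by
    exact_mod_cast Fintype.card_ne_zero
  have hQW : ∀ w ∈ W, Q w = w := by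
    intro w hw
    rw [hQapp]
    have hterm : ∀ g : G, magAct φ ρ g (P (magAct φ ρ g⁻¹ w)) = w := by
      intro g
      rw [hPW (magAct φ ρ g⁻¹ w) (hW g⁻¹ w hw), magAct_inv_cancel φ ρ hρ]
    rw [Finset.sum_congr rfl (fun g _ => hterm g), Finset.sum_const, Finset.card_univ,
      ← Nat.cast_smul_eq_nsmul ℂ, smul_smul, hc, inv_mul_cancel₀ hcard, one_smul]
  have hsum : ∀ (h : G) (f : G → (Fin n → ℂ)),
      magAct φ ρ h (∑ g : G, f g) = ∑ g : G, magAct φ ρ h (f g) := by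
    intro h f
    induction (Finset.univ : Finset G) using Finset.cons_induction with
    | empty => simp [magAct_zero]
    | cons a s ha ih => rw [Finset.sum_cons, Finset.sum_cons, magAct_add, ih]
  have hcomm : ∀ (h : G) (v : Fin n → ℂ), magAct φ ρ h (Q v) = Q (magAct φ ρ h v) := by
    intro h v
    rw [hQapp, hQapp, magAct_smul, hsconjc, hsum]
    congr 1
    have hterm : ∀ g : G, magAct φ ρ h (magAct φ ρ g (P (magAct φ ρ g⁻¹ v))) =
        magAct φ ρ (h * g) (P (magAct φ ρ (h * g)⁻¹ (magAct φ ρ h v))) := by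
      intro g
      rw [← magAct_mul φ ρ hρ, ← magAct_mul φ ρ hρ]
      congr 2
      rw [_root_.mul_inv_rev, mul_assoc, inv_mul_cancel, mul_one]
    rw [Finset.sum_congr rfl (fun g _ => hterm g)]
    exact Fintype.sum_equiv (Equiv.mulLeft h)
      (fun g => magAct φ ρ (h * g) (P (magAct φ ρ (h * g)⁻¹ (magAct φ ρ h v))))
      (fun g => magAct φ ρ g (P (magAct φ ρ g⁻¹ (magAct φ ρ h v)))) (fun g => rfl)
  refine ⟨LinearMap.ker Q, ?_, ?_, ?_⟩
  · intro g w hw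
    have hw0 : Q w = 0 := hw
    show Q ((ρ g : Matrix (Fin n) (Fin n) ℂ) *ᵥ sigmaPowVec (φ g) w) = 0
    have : (ρ g : Matrix (Fin n) (Fin n) ℂ) *ᵥ sigmaPowVec (φ g) w = magAct φ ρ g w := rfl
    rw [this, ← hcomm, hw0, magAct_zero]
  · rw [eq_bot_iff]
    rintro x ⟨hxW, hxK⟩
    have : Q x = 0 := hxK
    have hx : x = 0 := by rw [← hQW x hxW, this]
    simp [hx]
  · rw [eq_top_iff]
    intro x _
    have hx : x = Q x + (x - Q x) := by ring_nf
    rw [hx]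
    refine Submodule.add_mem _ (Submodule.mem_sup_left (hQmem x))
      (Submodule.mem_sup_right ?_)
    show Q (x - Q x) = 0
    rw [map_sub, hQW _ (hQmem x), sub_self]
end
end

section
/- (Complete reducibility.) Let (G, φ) be a finite magnetic group and ρ a magnetic representation of (G, φ) on ℂⁿ. Then there exists a finite family W₁, …, W_k of invariant ℂ-linear subspaces of ℂⁿ such that ℂⁿ is the internal direct sum of W₁, …, W_k and each W_i is irreducible, meaning W_i ≠ 0 and the only invariant subspaces contained in W_i are 0 and W_i. -/
open Matrix

noncomputable section

set_option linter.unusedSectionVars false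

namespace Stmt8Aux

lemma conjVec_conjVec {n : ℕ} (v : Fin n → ℂ) : conjVec (conjVec v) = v := by
  funext i; simp [conjVec]

lemma conjVec_add {n : ℕ} (u v : Fin n → ℂ) : conjVec (u + v) = conjVec u + conjVec v := by
  funext i; simp [conjVec]

lemma conjVec_smul_real {n : ℕ} (a : ℝ) (v : Fin n → ℂ) :
    conjVec (a • v) = a • conjVec v := by
  funext i; simp [conjVec, Complex.real_smul]

lemma conjVec_mulVec {m n : ℕ} (M : Matrix (Fin m) (Fin n) ℂ) (v : Fin n → ℂ) :
    conjVec (M.mulVec v) = (conjMat M).mulVec (conjVec v) := by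
  funext i
  simp [conjVec, conjMat, Matrix.mulVec, dotProduct, map_sum]

lemma zmod2_cases (ε : Multiplicative (ZMod 2)) : ε = 1 ∨ ε ≠ 1 := em _

lemma sigmaPowVec_one {n : ℕ} (v : Fin n → ℂ) : sigmaPowVec 1 v = v := if_pos rfl

lemma zmod2_mul_ne (ε δ : Multiplicative (ZMod 2)) (hε : ε ≠ 1) (hδ : δ ≠ 1) :
    ε * δ = 1 := by revert hε hδ; revert ε δ; decide

lemma zmod2_mul_ne' (ε δ : Multiplicative (ZMod 2)) (hε : ε ≠ 1) (hδ : δ = 1) :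
    ε * δ ≠ 1 := by subst hδ; simpa using hε

lemma sigmaPowVec_mul {n : ℕ} (ε δ : Multiplicative (ZMod 2)) (v : Fin n → ℂ) :
    sigmaPowVec (ε * δ) v = sigmaPowVec ε (sigmaPowVec δ v) := by
  rcases zmod2_cases ε with hε | hε <;> rcases zmod2_cases δ with hδ | hδ
  · simp [sigmaPowVec, hε, hδ]
  · simp [sigmaPowVec, hε, hδ]
  · simp [sigmaPowVec, hε, hδ, zmod2_mul_ne' ε δ hε hδ]
  · simp [sigmaPowVec, hε, hδ, zmod2_mul_ne ε δ hε hδ, conjVec_conjVec]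

lemma sigmaPowVec_add {n : ℕ} (ε : Multiplicative (ZMod 2)) (u v : Fin n → ℂ) :
    sigmaPowVec ε (u + v) = sigmaPowVec ε u + sigmaPowVec ε v := by
  unfold sigmaPowVec; split
  · rfl
  · exact conjVec_add u v

lemma sigmaPowVec_smul_real {n : ℕ} (ε : Multiplicative (ZMod 2)) (a : ℝ) (v : Fin n → ℂ) :
    sigmaPowVec ε (a • v) = a • sigmaPowVec ε v := by
  unfold sigmaPowVec; split
  · rfl
  · exact conjVec_smul_real a v

lemma sigmaPowVec_mulVec {m n : ℕ} (ε : Multiplicative (ZMod 2))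
    (M : Matrix (Fin m) (Fin n) ℂ) (v : Fin n → ℂ) :
    sigmaPowVec ε (M.mulVec v) = (sigmaPow ε M).mulVec (sigmaPowVec ε v) := by
  unfold sigmaPowVec sigmaPow; split
  · rfl
  · exact conjVec_mulVec M v

end Stmt8Aux

namespace Stmt8Aux

variable {G : Type*} [Group G] (φ : G →* Multiplicative (ZMod 2)) {n : ℕ}
  (ρ : G → Matrix.GeneralLinearGroup (Fin n) ℂ)

/-- The (real-linear) action of `g` on `ℂⁿ`. -/
def act (g : G) (v : Fin n → ℂ) : Fin n → ℂ :=
  (ρ g : Matrix (Fin n) (Fin n) ℂ).mulVec (sigmaPowVec (φ g) v)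

lemma rho_one (hρ : IsMagneticRep φ ρ) :
    ((ρ 1 : Matrix.GeneralLinearGroup (Fin n) ℂ) : Matrix (Fin n) (Fin n) ℂ) = 1 := by
  have h := hρ 1 1
  rw [one_mul, _root_.map_one] at h
  have h' : (ρ 1 : Matrix (Fin n) (Fin n) ℂ) = (ρ 1 : Matrix (Fin n) (Fin n) ℂ) *
      (ρ 1 : Matrix (Fin n) (Fin n) ℂ) := by
    simpa [sigmaPow] using h
  have hu : (ρ 1 : Matrix.GeneralLinearGroup (Fin n) ℂ) = ρ 1 * ρ 1 := Units.ext h'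
  have h1 : ρ 1 * (1 : Matrix.GeneralLinearGroup (Fin n) ℂ) = ρ 1 * ρ 1 := by
    rw [mul_one, ← hu]
  have h2 := mul_left_cancel h1
  rw [← h2]; rfl

lemma act_one (hρ : IsMagneticRep φ ρ) (v : Fin n → ℂ) : act φ ρ 1 v = v := by
  unfold act
  rw [rho_one φ ρ hρ, _root_.map_one, sigmaPowVec_one, Matrix.one_mulVec]

lemma act_mul (hρ : IsMagneticRep φ ρ) (g h : G) (v : Fin n → ℂ) :
    act φ ρ (g * h) v = act φ ρ g (act φ ρ h v) := by
  unfold act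
  rw [hρ g h, _root_.map_mul, sigmaPowVec_mul, sigmaPowVec_mulVec, ← Matrix.mulVec_mulVec]

lemma act_inv_cancel (hρ : IsMagneticRep φ ρ) (g : G) (v : Fin n → ℂ) :
    act φ ρ g (act φ ρ g⁻¹ v) = v := by
  rw [← act_mul φ ρ hρ, mul_inv_cancel, act_one φ ρ hρ]

lemma act_add (g : G) (u v : Fin n → ℂ) :
    act φ ρ g (u + v) = act φ ρ g u + act φ ρ g v := by
  unfold act
  rw [sigmaPowVec_add, Matrix.mulVec_add]

lemma act_smul_real (g : G) (a : ℝ) (v : Fin n → ℂ) :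
    act φ ρ g (a • v) = a • act φ ρ g v := by
  unfold act
  rw [sigmaPowVec_smul_real]
  have : a • sigmaPowVec (φ g) v = ((a : ℂ)) • sigmaPowVec (φ g) v := by
    funext i; simp [Complex.real_smul]
  rw [this, Matrix.mulVec_smul]
  funext i; simp [Complex.real_smul]

lemma act_neg (g : G) (v : Fin n → ℂ) : act φ ρ g (-v) = -act φ ρ g v := by
  have := act_smul_real φ ρ g (-1) v
  simpa using this

lemma act_I (g : G) :
    (∀ v : Fin n → ℂ, act φ ρ g (Complex.I • v) = Complex.I • act φ ρ g v) ∨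
    (∀ v : Fin n → ℂ, act φ ρ g (Complex.I • v) = -(Complex.I • act φ ρ g v)) := by
  rcases zmod2_cases (φ g) with hg | hg
  · left; intro v
    unfold act
    rw [hg, sigmaPowVec_one, sigmaPowVec_one, Matrix.mulVec_smul]
  · right; intro v
    unfold act
    have h1 : sigmaPowVec (φ g) (Complex.I • v) = -(Complex.I • sigmaPowVec (φ g) v) := by
      funext i
      simp only [sigmaPowVec, if_neg hg, conjVec, Pi.neg_apply,
        Pi.smul_apply, smul_eq_mul, _root_.map_mul, Complex.conj_I]
      ring
    rw [h1, Matrix.mulVec_neg, Matrix.mulVec_smul]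

/-- The standard real inner product on `ℂⁿ`. -/
def rIn (u v : Fin n → ℂ) : ℝ := ∑ i, ((starRingEnd ℂ) (u i) * v i).re

lemma rIn_comm (u v : Fin n → ℂ) : rIn u v = rIn v u := by
  unfold rIn
  congr 1; funext i
  rw [show (starRingEnd ℂ) (v i) * u i = (starRingEnd ℂ) ((starRingEnd ℂ) (u i) * v i) by
    simp [mul_comm]]
  exact (Complex.conj_re _).symm

lemma rIn_add_left (u v w : Fin n → ℂ) : rIn (u + v) w = rIn u w + rIn v w := by
  unfold rIn
  rw [← Finset.sum_add_distrib]
  congr 1; funext i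
  simp [add_mul]

lemma rIn_smul_left (a : ℝ) (u v : Fin n → ℂ) : rIn (a • u) v = a * rIn u v := by
  unfold rIn
  rw [Finset.mul_sum]
  congr 1; funext i
  simp [Complex.real_smul]; ring

lemma rIn_neg_left (u v : Fin n → ℂ) : rIn (-u) v = -rIn u v := by
  have := rIn_smul_left (-1) u v
  simpa using this

lemma rIn_smul_I (u v : Fin n → ℂ) : rIn (Complex.I • u) (Complex.I • v) = rIn u v := by
  unfold rIn
  congr 1; funext i
  have : (starRingEnd ℂ) (Complex.I * u i) * (Complex.I * v i)
      = (starRingEnd ℂ) (u i) * v i := by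
    simp only [_root_.map_mul, Complex.conj_I]
    ring_nf
    rw [Complex.I_sq]
    ring
  simp only [Pi.smul_apply, smul_eq_mul, this]

lemma rIn_self_nonneg (v : Fin n → ℂ) : 0 ≤ rIn v v := by
  apply Finset.sum_nonneg
  intro i _
  rw [show (starRingEnd ℂ) (v i) * v i = ((Complex.normSq (v i) : ℝ) : ℂ) by
    rw [mul_comm]; exact Complex.mul_conj _]
  simp [Complex.normSq_nonneg]

lemma rIn_self_eq_zero {v : Fin n → ℂ} (h : rIn v v = 0) : v = 0 := by
  funext i
  have hterm : ∀ j ∈ Finset.univ, (0:ℝ) ≤ ((starRingEnd ℂ) (v j) * v j).re := by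
    intro j _
    rw [show (starRingEnd ℂ) (v j) * v j = ((Complex.normSq (v j) : ℝ) : ℂ) by
      rw [mul_comm]; exact Complex.mul_conj _]
    simp [Complex.normSq_nonneg]
  have := (Finset.sum_eq_zero_iff_of_nonneg hterm).mp h i (Finset.mem_univ i)
  rw [show (starRingEnd ℂ) (v i) * v i = ((Complex.normSq (v i) : ℝ) : ℂ) by
    rw [mul_comm]; exact Complex.mul_conj _] at this
  simp only [Complex.ofReal_re] at this
  simpa using Complex.normSq_eq_zero.mp this

end Stmt8Aux

namespace Stmt8Aux

variable {G : Type*} [Group G] [Fintype G] (φ : G →* Multiplicative (ZMod 2)) {n : ℕ}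
  (ρ : G → Matrix.GeneralLinearGroup (Fin n) ℂ)

/-- The averaged invariant real inner product. -/
def Bf (u v : Fin n → ℂ) : ℝ := ∑ g : G, rIn (act φ ρ g u) (act φ ρ g v)

lemma Bf_comm (u v : Fin n → ℂ) : Bf φ ρ u v = Bf φ ρ v u := by
  unfold Bf; congr 1; funext g; exact rIn_comm _ _

lemma Bf_add_left (u v w : Fin n → ℂ) :
    Bf φ ρ (u + v) w = Bf φ ρ u w + Bf φ ρ v w := by
  unfold Bf
  rw [← Finset.sum_add_distrib]
  congr 1; funext g
  rw [act_add, rIn_add_left]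

lemma Bf_smul_left (a : ℝ) (u v : Fin n → ℂ) :
    Bf φ ρ (a • u) v = a * Bf φ ρ u v := by
  unfold Bf
  rw [Finset.mul_sum]
  congr 1; funext g
  rw [act_smul_real, rIn_smul_left]

lemma Bf_add_right (u v w : Fin n → ℂ) :
    Bf φ ρ u (v + w) = Bf φ ρ u v + Bf φ ρ u w := by
  rw [Bf_comm, Bf_add_left, Bf_comm φ ρ v u, Bf_comm φ ρ w u]

lemma Bf_smul_right (a : ℝ) (u v : Fin n → ℂ) :
    Bf φ ρ u (a • v) = a * Bf φ ρ u v := by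
  rw [Bf_comm, Bf_smul_left, Bf_comm φ ρ v u]

lemma Bf_neg_left (u v : Fin n → ℂ) : Bf φ ρ (-u) v = -Bf φ ρ u v := by
  have := Bf_smul_left φ ρ (-1) u v
  simpa using this

lemma Bf_smul_I (u v : Fin n → ℂ) :
    Bf φ ρ (Complex.I • u) (Complex.I • v) = Bf φ ρ u v := by
  unfold Bf
  congr 1; funext g
  rcases act_I φ ρ g with h | h
  · rw [h u, h v, rIn_smul_I]
  · rw [h u, h v, rIn_neg_left, rIn_comm, rIn_neg_left, neg_neg, rIn_comm, rIn_smul_I]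

lemma Bf_act (hρ : IsMagneticRep φ ρ) (h : G) (u v : Fin n → ℂ) :
    Bf φ ρ (act φ ρ h u) (act φ ρ h v) = Bf φ ρ u v := by
  unfold Bf
  apply Fintype.sum_equiv (Equiv.mulRight h)
  intro g
  rw [Equiv.coe_mulRight, act_mul φ ρ hρ, act_mul φ ρ hρ]

lemma Bf_self_eq_zero (hρ : IsMagneticRep φ ρ) {v : Fin n → ℂ}
    (h : Bf φ ρ v v = 0) : v = 0 := by
  have hnn : ∀ g ∈ (Finset.univ : Finset G),
      (0:ℝ) ≤ rIn (act φ ρ g v) (act φ ρ g v) := fun g _ => rIn_self_nonneg _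
  have h1 := (Finset.sum_eq_zero_iff_of_nonneg hnn).mp h 1 (Finset.mem_univ 1)
  rw [act_one φ ρ hρ] at h1
  exact rIn_self_eq_zero h1

/-- The orthogonal complement of a complex subspace w.r.t. `Bf`, as a complex subspace. -/
def orthC (W : Submodule ℂ (Fin n → ℂ)) : Submodule ℂ (Fin n → ℂ) where
  carrier := {u | ∀ w ∈ W, Bf φ ρ w u = 0}
  add_mem' := by
    intro u v hu hv w hw
    rw [Bf_add_right, hu w hw, hv w hw, add_zero]
  zero_mem' := by
    intro w hw
    have := Bf_smul_right φ ρ 0 w (0 : Fin n → ℂ)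
    simpa using this
  smul_mem' := by
    intro c u hu w hw
    have hdec : c • u = c.re • u + c.im • (Complex.I • u) := by
      funext i
      simp only [Pi.add_apply, Pi.smul_apply, smul_eq_mul, Complex.real_smul]
      rw [show (c.re : ℂ) * u i + (c.im : ℂ) * (Complex.I * u i)
          = ((c.re : ℂ) + (c.im : ℂ) * Complex.I) * u i by ring, Complex.re_add_im]
    rw [hdec, Bf_add_right, Bf_smul_right, Bf_smul_right, hu w hw]
    have hI : Bf φ ρ w (Complex.I • u) = 0 := by
      have h1 : w = Complex.I • ((-Complex.I) • w) := by
        funext i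
        simp only [Pi.smul_apply, smul_eq_mul]
        rw [show Complex.I * (-Complex.I * w i) = -(Complex.I*Complex.I) * w i by ring,
          Complex.I_mul_I]
        ring
      rw [h1, Bf_smul_I]
      have h2 : (-Complex.I) • w = -(Complex.I • w) := by
        funext i; simp
      rw [h2, Bf_neg_left]
      rw [hu (Complex.I • w) (W.smul_mem _ hw)]
      simp
    rw [hI]
    simp

lemma orthC_invariant (hρ : IsMagneticRep φ ρ) (W : Submodule ℂ (Fin n → ℂ))
    (hW : MagInvariant φ ρ W) : MagInvariant φ ρ (orthC φ ρ W) := by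
  intro g u hu
  show ∀ w ∈ W, Bf φ ρ w (act φ ρ g u) = 0
  intro w hw
  have h1 : w = act φ ρ g (act φ ρ g⁻¹ w) := (act_inv_cancel φ ρ hρ g w).symm
  rw [h1, Bf_act φ ρ hρ]
  exact hu _ (hW g⁻¹ w hw)

lemma orthC_inf (hρ : IsMagneticRep φ ρ) (W : Submodule ℂ (Fin n → ℂ)) :
    W ⊓ orthC φ ρ W = ⊥ := by
  rw [eq_bot_iff]
  intro u hu
  have h1 : Bf φ ρ u u = 0 := hu.2 u hu.1
  simpa using Bf_self_eq_zero φ ρ hρ h1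

/-- `Bf` as a real bilinear form. -/
def Bform : LinearMap.BilinForm ℝ (Fin n → ℂ) :=
  LinearMap.mk₂ ℝ (Bf φ ρ) (Bf_add_left φ ρ) (fun a u v => Bf_smul_left φ ρ a u v)
    (Bf_add_right φ ρ) (fun a u v => Bf_smul_right φ ρ a u v)

lemma orthC_sup (hρ : IsMagneticRep φ ρ) (W : Submodule ℂ (Fin n → ℂ)) :
    W ⊔ orthC φ ρ W = ⊤ := by
  have hrefl : (Bform φ ρ).IsRefl := by
    intro x y hxy
    rw [show ((Bform φ ρ) y) x = Bf φ ρ y x from rfl, Bf_comm]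
    exact hxy
  set Wr : Submodule ℝ (Fin n → ℂ) := W.restrictScalars ℝ with hWr
  have hnd : ((Bform φ ρ).restrict Wr).Nondegenerate := by
    constructor <;>
    · intro x hx
      have := hx x
      rw [LinearMap.BilinForm.restrict_apply] at this
      have hx0 : (x : Fin n → ℂ) = 0 := Bf_self_eq_zero φ ρ hρ this
      exact Subtype.ext hx0
  have hcompl := LinearMap.BilinForm.isCompl_orthogonal_of_restrict_nondegenerate
    hrefl hnd
  have hsupr : Wr ⊔ (Bform φ ρ).orthogonal Wr = ⊤ := hcompl.sup_eq_top
  have horth : (Bform φ ρ).orthogonal Wr = (orthC φ ρ W).restrictScalars ℝ := by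
    ext u
    rw [LinearMap.BilinForm.mem_orthogonal_iff]
    rfl
  rw [eq_top_iff]
  intro x _
  have hx : x ∈ Wr ⊔ (Bform φ ρ).orthogonal Wr := by rw [hsupr]; trivial
  obtain ⟨a, ha, b, hb, rfl⟩ := Submodule.mem_sup.mp hx
  rw [horth] at hb
  exact Submodule.add_mem_sup ha hb

end Stmt8Aux

namespace Stmt8Aux

section Decomp

variable {G : Type*} [Group G] [Fintype G] (φ : G →* Multiplicative (ZMod 2)) {n : ℕ}
  (ρ : G → Matrix.GeneralLinearGroup (Fin n) ℂ)

lemma exists_min (V : Submodule ℂ (Fin n → ℂ)) (hV : MagInvariant φ ρ V) (hne : V ≠ ⊥) :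
    ∃ U : Submodule ℂ (Fin n → ℂ), U ≤ V ∧ MagInvariant φ ρ U ∧ U ≠ ⊥ ∧
      ∀ W' : Submodule ℂ (Fin n → ℂ), W' ≤ U → MagInvariant φ ρ W' → W' = ⊥ ∨ W' = U := by
  classical
  have hex : ∃ d : ℕ, ∃ U : Submodule ℂ (Fin n → ℂ),
      (U ≤ V ∧ MagInvariant φ ρ U ∧ U ≠ ⊥) ∧ Module.finrank ℂ U = d :=
    ⟨Module.finrank ℂ V, V, ⟨le_rfl, hV, hne⟩, rfl⟩
  obtain ⟨U, ⟨hUV, hUinv, hUne⟩, hUd⟩ := Nat.find_spec hex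
  refine ⟨U, hUV, hUinv, hUne, ?_⟩
  intro W' hW'U hW'inv
  by_cases hW'ne : W' = ⊥
  · exact Or.inl hW'ne
  right
  have hle : Nat.find hex ≤ Module.finrank ℂ W' :=
    Nat.find_le ⟨W', ⟨hW'U.trans hUV, hW'inv, hW'ne⟩, rfl⟩
  have hge : Module.finrank ℂ W' ≤ Module.finrank ℂ U := Submodule.finrank_mono hW'U
  exact Submodule.eq_of_le_of_finrank_le hW'U (by omega)

lemma iSup_cons {k : ℕ} (U : Submodule ℂ (Fin n → ℂ)) (W : Fin k → Submodule ℂ (Fin n → ℂ)) :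
    (⨆ i, Fin.cons U W i) = U ⊔ ⨆ i, W i := by
  apply le_antisymm
  · apply iSup_le
    intro i
    refine Fin.cases ?_ ?_ i
    · exact le_sup_left
    · intro j
      rw [Fin.cons_succ]
      exact le_sup_of_le_right (le_iSup W j)
  · apply sup_le
    · exact le_iSup_of_le 0 (by rw [Fin.cons_zero])
    · exact iSup_le fun j => le_iSup_of_le j.succ (by rw [Fin.cons_succ])

lemma decomp (hρ : IsMagneticRep φ ρ) :
    ∀ (d : ℕ) (V : Submodule ℂ (Fin n → ℂ)), Module.finrank ℂ V ≤ d → MagInvariant φ ρ V →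
    ∃ (k : ℕ) (W : Fin k → Submodule ℂ (Fin n → ℂ)),
      iSupIndep W ∧ (⨆ i, W i) = V ∧
      ∀ i, MagInvariant φ ρ (W i) ∧ W i ≠ ⊥ ∧
        ∀ W' : Submodule ℂ (Fin n → ℂ), W' ≤ W i → MagInvariant φ ρ W' →
          W' = ⊥ ∨ W' = W i := by
  intro d
  induction d with
  | zero =>
    intro V hr hV
    have hVbot : V = ⊥ := by
      have h0 : Module.finrank ℂ V = 0 := Nat.le_zero.mp hr
      exact Submodule.finrank_eq_zero.mp h0
    refine ⟨0, fun i => i.elim0, ?_, ?_, fun i => i.elim0⟩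
    · intro i; exact i.elim0
    · rw [iSup_of_empty]; exact hVbot.symm
  | succ d ih =>
    intro V hr hV
    by_cases hbot : V = ⊥
    · refine ⟨0, fun i => i.elim0, ?_, ?_, fun i => i.elim0⟩
      · intro i; exact i.elim0
      · rw [iSup_of_empty]; exact hbot.symm
    obtain ⟨U, hUV, hUinv, hUne, hUmin⟩ := exists_min φ ρ V hV hbot
    set V' : Submodule ℂ (Fin n → ℂ) := V ⊓ orthC φ ρ U with hV'def
    have hV'inv : MagInvariant φ ρ V' := by
      intro g w hw
      exact ⟨hV g w hw.1, orthC_invariant φ ρ hρ U hUinv g w hw.2⟩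
    have hsup : U ⊔ V' = V := by
      rw [hV'def, inf_comm, ← sup_inf_assoc_of_le _ hUV, orthC_sup φ ρ hρ, top_inf_eq]
    have hdisj : U ⊓ V' = ⊥ := by
      rw [eq_bot_iff, ← orthC_inf φ ρ hρ U]
      exact inf_le_inf_left U (le_trans inf_le_right le_rfl)
    have hadd := Submodule.finrank_sup_add_finrank_inf_eq U V'
    rw [hsup, hdisj] at hadd
    have hUpos : 0 < Module.finrank ℂ U :=
      Nat.pos_of_ne_zero (fun h => hUne (Submodule.finrank_eq_zero.mp h))
    have hbotrank : Module.finrank ℂ (⊥ : Submodule ℂ (Fin n → ℂ)) = 0 := finrank_bot ℂ _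
    have hV'r : Module.finrank ℂ V' ≤ d := by omega
    obtain ⟨k, W, hind, hsupW, hprops⟩ := ih V' hV'r hV'inv
    have hWleV' : ∀ j, W j ≤ V' := fun j => hsupW ▸ le_iSup W j
    refine ⟨k + 1, Fin.cons U W, ?_, ?_, ?_⟩
    · rw [iSupIndep_def]
      intro i
      refine Fin.cases ?_ ?_ i
      · have h1 : (⨆ (j) (_ : j ≠ (0 : Fin (k+1))), Fin.cons U W j) ≤ V' := by
          apply iSup_le; intro j; apply iSup_le; intro hj
          obtain ⟨j', rfl⟩ := Fin.exists_succ_eq.mpr hj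
          rw [Fin.cons_succ]
          exact hWleV' j'
        rw [Fin.cons_zero]
        exact (disjoint_iff.mpr hdisj).mono_right h1
      · intro i'
        rw [Fin.cons_succ, Submodule.disjoint_def]
        intro x hxW hxS
        have hS : (⨆ (j) (_ : j ≠ i'.succ), Fin.cons U W j) ≤
            U ⊔ ⨆ (j) (_ : j ≠ i'), W j := by
          apply iSup_le; intro j
          induction j using Fin.cases with
          | zero =>
            apply iSup_le; intro hj
            rw [Fin.cons_zero]; exact le_sup_left
          | succ j' =>
            apply iSup_le; intro hj
            rw [Fin.cons_succ]
            rcases eq_or_ne j' i' with rfl | hne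
            · exact absurd rfl hj
            · exact le_sup_of_le_right (le_iSup₂_of_le j' hne le_rfl)
        have hxUX := hS hxS
        obtain ⟨u, hu, y, hy, hxy⟩ := Submodule.mem_sup.mp hxUX
        have hXle : (⨆ (j) (_ : j ≠ i'), W j) ≤ V' :=
          iSup_le fun j => iSup_le fun _ => hWleV' j
        have hyV' : y ∈ V' := hXle hy
        have hxV' : x ∈ V' := hWleV' i' hxW
        have huV' : u ∈ V' := by
          rw [show u = x - y by rw [← hxy]; abel]
          exact V'.sub_mem hxV' hyV'
        have hu0 : u = 0 := by
          have hm : u ∈ U ⊓ V' := ⟨hu, huV'⟩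
          rwa [hdisj, Submodule.mem_bot] at hm
        have hxX : x ∈ ⨆ (j) (_ : j ≠ i'), W j := by
          rw [← hxy, hu0, zero_add]; exact hy
        exact (Submodule.disjoint_def.mp (iSupIndep_def.mp hind i')) x hxW hxX
    · rw [iSup_cons, hsupW, hsup]
    · intro i
      refine Fin.cases ?_ ?_ i
      · rw [Fin.cons_zero]; exact ⟨hUinv, hUne, hUmin⟩
      · intro j; rw [Fin.cons_succ]; exact hprops j

end Decomp

end Stmt8Aux


theorem stmt8 {G : Type*} [Group G] [Finite G]
    (φ : G →* Multiplicative (ZMod 2)) (hφ : Function.Surjective φ) {n : ℕ}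
    (ρ : G → Matrix.GeneralLinearGroup (Fin n) ℂ) (hρ : IsMagneticRep φ ρ) :
    ∃ (k : ℕ) (W : Fin k → Submodule ℂ (Fin n → ℂ)),
      DirectSum.IsInternal W ∧
      ∀ i : Fin k,
        MagInvariant φ ρ (W i) ∧ W i ≠ ⊥ ∧
        ∀ W' : Submodule ℂ (Fin n → ℂ), W' ≤ W i → MagInvariant φ ρ W' →
          W' = ⊥ ∨ W' = W i := by
  cases nonempty_fintype G
  obtain ⟨k, W, hind, hsup, hprops⟩ := Stmt8Aux.decomp φ ρ hρ
    (Module.finrank ℂ (⊤ : Submodule ℂ (Fin n → ℂ))) ⊤ le_rfl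
    (fun g w _ => Submodule.mem_top)
  exact ⟨k, W,
    (DirectSum.isInternal_submodule_iff_iSupIndep_and_iSup_eq_top W).mpr ⟨hind, hsup⟩,
    hprops⟩
end
end

section
/- Let G be a finite group, φ : G → ℤ/2 a surjective group homomorphism with kernel G₀, a ∈ G ∖ G₀, and ρ : G₀ → GL(n, ℂ) an irreducible group homomorphism, with conjugate representation ρ*(g) = σ(ρ(a⁻¹ g a)). If S ∈ GL(n, ℂ) is any isomorphism from ρ* to ρ, i.e., S · ρ*(g) = ρ(g) · S for all g ∈ G₀, then there exists a nonzero real number c such that S · σ(S) = c · ρ(a²). -/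
open Matrix

noncomputable section

theorem conjMat_smul {m n : ℕ} (c : ℂ) (M : Matrix (Fin m) (Fin n) ℂ) :
    conjMat (c • M) = (starRingEnd ℂ c) • conjMat M := by
  ext i j; simp [conjMat]

theorem schur_aux {H : Type*} {n : ℕ} (ρ : H → Matrix.GeneralLinearGroup (Fin n) ℂ)
    (hirr : IsClassIrreducible ρ) (T : Matrix (Fin n) (Fin n) ℂ)
    (hT : ∀ h : H, (ρ h : Matrix (Fin n) (Fin n) ℂ) * T = T * (ρ h : Matrix (Fin n) (Fin n) ℂ)) :
    ∃ c : ℂ, T = c • (1 : Matrix (Fin n) (Fin n) ℂ) := by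
  have hn : n ≠ 0 := by
    rintro rfl
    exact hirr.1 (Subsingleton.elim _ _)
  haveI : Nonempty (Fin n) := Fin.pos_iff_nonempty.mp (Nat.pos_of_ne_zero hn)
  obtain ⟨c, hc⟩ := Module.End.exists_eigenvalue (Matrix.toLin' T)
  refine ⟨c, ?_⟩
  set W : Submodule ℂ (Fin n → ℂ) := Module.End.eigenspace (Matrix.toLin' T) c with hW
  have hinv : ∀ h : H, ∀ w ∈ W, (ρ h : Matrix (Fin n) (Fin n) ℂ).mulVec w ∈ W := by
    intro h w hw
    rw [hW, Module.End.mem_eigenspace_iff] at hw ⊢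
    have : T.mulVec ((ρ h : Matrix (Fin n) (Fin n) ℂ).mulVec w)
        = (ρ h : Matrix (Fin n) (Fin n) ℂ).mulVec (T.mulVec w) := by
      rw [Matrix.mulVec_mulVec, Matrix.mulVec_mulVec, hT h]
    rw [Matrix.toLin'_apply] at hw ⊢
    rw [this, hw, Matrix.mulVec_smul]
  have hWtop : W = ⊤ := by
    rcases hirr.2 W hinv with h | h
    · exact absurd h hc
    · exact h
  have hall : ∀ v : Fin n → ℂ, T.mulVec v = c • v := by
    intro v
    have : v ∈ W := hWtop ▸ Submodule.mem_top
    rw [hW, Module.End.mem_eigenspace_iff, Matrix.toLin'_apply] at this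
    exact this
  ext i j
  have := congrFun (hall (Pi.single j 1)) i
  simpa [Matrix.mulVec_single, Matrix.one_apply, Pi.single_apply, eq_comm] using this


theorem stmt9 {G : Type*} [Group G] [Finite G]
    (φ : G →* Multiplicative (ZMod 2)) (hφ : Function.Surjective φ)
    (a : G) (ha : a ∉ φ.ker) {n : ℕ}
    (ρ : φ.ker →* Matrix.GeneralLinearGroup (Fin n) ℂ)
    (hirr : IsClassIrreducible fun g : φ.ker => ρ g)
    (S : Matrix.GeneralLinearGroup (Fin n) ℂ)
    (hS : ∀ g : φ.ker,
      (S : Matrix (Fin n) (Fin n) ℂ) * conjMat (ρ (kerConj φ a g) : Matrix (Fin n) (Fin n) ℂ) =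
        (ρ g : Matrix (Fin n) (Fin n) ℂ) * (S : Matrix (Fin n) (Fin n) ℂ)) :
    ∃ c : ℝ, c ≠ 0 ∧
      (S : Matrix (Fin n) (Fin n) ℂ) * conjMat (S : Matrix (Fin n) (Fin n) ℂ) =
        (c : ℂ) • (ρ ⟨a * a, sq_mem φ a⟩ : Matrix (Fin n) (Fin n) ℂ) := by
  classical
  set k := kerConj φ a with hk
  set b : φ.ker := ⟨a * a, sq_mem φ a⟩ with hb
  set Sm : Matrix (Fin n) (Fin n) ℂ := (S : Matrix (Fin n) (Fin n) ℂ) with hSm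
  set R : φ.ker → Matrix (Fin n) (Fin n) ℂ := fun g => (ρ g : Matrix (Fin n) (Fin n) ℂ) with hR
  have hn : n ≠ 0 := by
    rintro rfl
    exact hirr.1 (Subsingleton.elim _ _)
  haveI : Nonempty (Fin n) := Fin.pos_iff_nonempty.mp (Nat.pos_of_ne_zero hn)
  have hkk : ∀ g : φ.ker, k (k g) = b⁻¹ * g * b := by
    intro g
    apply Subtype.ext
    show a⁻¹ * (a⁻¹ * ↑g * a) * a = (a * a)⁻¹ * ↑g * (a * a)
    group
  have hkb : k b = b := by
    apply Subtype.ext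
    show a⁻¹ * (a * a) * a = a * a
    group
  -- conjugated hS
  have hS' : ∀ g : φ.ker, conjMat Sm * R (k (k g)) = conjMat (R (k g)) * conjMat Sm := by
    intro g
    have := congrArg conjMat (hS (k g))
    rwa [conjMat_mul, conjMat_mul, conjMat_conjMat] at this
  set A : Matrix (Fin n) (Fin n) ℂ := Sm * conjMat Sm with hA
  set B : Matrix (Fin n) (Fin n) ℂ := R b with hB
  set Binv : Matrix (Fin n) (Fin n) ℂ := (((ρ b)⁻¹ : Matrix.GeneralLinearGroup (Fin n) ℂ) : Matrix (Fin n) (Fin n) ℂ) with hBinv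
  have hBB : B * Binv = 1 := by
    show ((ρ b : Matrix.GeneralLinearGroup (Fin n) ℂ) : Matrix (Fin n) (Fin n) ℂ) *
      (((ρ b)⁻¹ : Matrix.GeneralLinearGroup (Fin n) ℂ) : Matrix (Fin n) (Fin n) ℂ) = 1
    rw [← Units.val_mul, mul_inv_cancel, Units.val_one]
  have hBB' : Binv * B = 1 := by
    show (((ρ b)⁻¹ : Matrix.GeneralLinearGroup (Fin n) ℂ) : Matrix (Fin n) (Fin n) ℂ) *
      ((ρ b : Matrix.GeneralLinearGroup (Fin n) ℂ) : Matrix (Fin n) (Fin n) ℂ) = 1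
    rw [← Units.val_mul, inv_mul_cancel, Units.val_one]
  have hRconj : ∀ g : φ.ker, R (b⁻¹ * g * b) = Binv * R g * B := by
    intro g
    show ((ρ (b⁻¹ * g * b) : Matrix.GeneralLinearGroup (Fin n) ℂ) : Matrix (Fin n) (Fin n) ℂ)
      = _ * _ * _
    rw [_root_.map_mul, _root_.map_mul, map_inv, Units.val_mul, Units.val_mul]
  have key : ∀ g : φ.ker, R g * A = A * Binv * R g * B := by
    intro g
    calc R g * A = (R g * Sm) * conjMat Sm := by rw [hA, mul_assoc]
    _ = (Sm * conjMat (R (k g))) * conjMat Sm := by rw [hS g]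
    _ = Sm * (conjMat (R (k g)) * conjMat Sm) := by rw [mul_assoc]
    _ = Sm * (conjMat Sm * R (k (k g))) := by rw [hS' g]
    _ = A * Binv * R g * B := by
          rw [hkk g, hRconj g, hA]; simp only [mul_assoc]
  set T : Matrix (Fin n) (Fin n) ℂ := A * Binv with hT
  have hTcomm : ∀ g : φ.ker, R g * T = T * R g := by
    intro g
    calc R g * T = (R g * A) * Binv := by rw [hT]; simp only [hA, mul_assoc]
    _ = A * Binv * R g * (B * Binv) := by rw [key g, hT]; simp only [mul_assoc]
    _ = T * R g := by rw [hBB, mul_one, hT]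
  obtain ⟨c, hc⟩ := schur_aux (fun g : φ.ker => ρ g) hirr T hTcomm
  have hAcB : A = c • B := by
    calc A = A * (Binv * B) := by rw [hBB', mul_one]
    _ = T * B := by rw [hT]; simp only [hA, mul_assoc]
    _ = (c • (1 : Matrix (Fin n) (Fin n) ℂ)) * B := by rw [hc]
    _ = c • B := by rw [smul_mul_assoc, one_mul]
  -- c ≠ 0
  have hcne : c ≠ 0 := by
    intro h0
    have hA0 : A = 0 := by rw [hAcB, h0, zero_smul]
    have hAu : A = ((S * conjGL S : Matrix.GeneralLinearGroup (Fin n) ℂ) :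
        Matrix (Fin n) (Fin n) ℂ) := by
      rw [hA, Units.val_mul]
      rfl
    have : (1 : Matrix (Fin n) (Fin n) ℂ) = 0 := by
      have h1 : (((S * conjGL S)⁻¹ : Matrix.GeneralLinearGroup (Fin n) ℂ) :
          Matrix (Fin n) (Fin n) ℂ) * ((S * conjGL S : Matrix.GeneralLinearGroup (Fin n) ℂ) :
          Matrix (Fin n) (Fin n) ℂ) = 1 := by
        rw [← Units.val_mul, inv_mul_cancel, Units.val_one]
      rw [← h1, ← hAu, hA0, mul_zero]
    have i : Fin n := Classical.arbitrary (Fin n)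
    have h2 := congrFun (congrFun this i) i
    simp [Matrix.one_apply] at h2
  -- realness
  have hSB : Sm * conjMat B = B * Sm := by
    have := hS b
    rw [hkb] at this
    exact this
  have hconjA : conjMat Sm * Sm = (starRingEnd ℂ c) • conjMat B := by
    have := congrArg conjMat hAcB
    rwa [hA, conjMat_mul, conjMat_conjMat, conjMat_smul] at this
  have hcc : c • (B * Sm) = (starRingEnd ℂ c) • (B * Sm) := by
    calc c • (B * Sm) = (c • B) * Sm := by rw [smul_mul_assoc]
    _ = A * Sm := by rw [hAcB]
    _ = Sm * (conjMat Sm * Sm) := by rw [hA, mul_assoc]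
    _ = Sm * ((starRingEnd ℂ c) • conjMat B) := by rw [hconjA]
    _ = (starRingEnd ℂ c) • (Sm * conjMat B) := by rw [mul_smul_comm]
    _ = (starRingEnd ℂ c) • (B * Sm) := by rw [hSB]
  have hBSu : B * Sm = ((ρ b * S : Matrix.GeneralLinearGroup (Fin n) ℂ) :
      Matrix (Fin n) (Fin n) ℂ) := by
    rw [Units.val_mul]
  have hc1 : c • (1 : Matrix (Fin n) (Fin n) ℂ) =
      (starRingEnd ℂ c) • (1 : Matrix (Fin n) (Fin n) ℂ) := by
    have h1 : ((ρ b * S : Matrix.GeneralLinearGroup (Fin n) ℂ) :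
        Matrix (Fin n) (Fin n) ℂ) * (((ρ b * S)⁻¹ : Matrix.GeneralLinearGroup (Fin n) ℂ) :
        Matrix (Fin n) (Fin n) ℂ) = 1 := by
      rw [← Units.val_mul, mul_inv_cancel, Units.val_one]
    calc c • (1 : Matrix (Fin n) (Fin n) ℂ)
        = c • ((B * Sm) * ((ρ b * S : Matrix.GeneralLinearGroup (Fin n) ℂ))⁻¹.val) := by
          rw [hBSu, h1]
    _ = (c • (B * Sm)) * ((ρ b * S : Matrix.GeneralLinearGroup (Fin n) ℂ))⁻¹.val := by
          rw [smul_mul_assoc]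
    _ = ((starRingEnd ℂ c) • (B * Sm)) * _ := by rw [hcc]
    _ = (starRingEnd ℂ c) • ((B * Sm) * ((ρ b * S : Matrix.GeneralLinearGroup (Fin n) ℂ))⁻¹.val) := by
          rw [smul_mul_assoc]
    _ = (starRingEnd ℂ c) • (1 : Matrix (Fin n) (Fin n) ℂ) := by rw [hBSu, h1]
  have hcreal : starRingEnd ℂ c = c := by
    have i : Fin n := Classical.arbitrary (Fin n)
    have h2 := congrFun (congrFun hc1 i) i
    simp only [Matrix.smul_apply, Matrix.one_apply_eq, smul_eq_mul, mul_one] at h2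
    exact h2.symm
  obtain ⟨r, hr⟩ : ∃ r : ℝ, (r : ℂ) = c := ⟨c.re, Complex.conj_eq_iff_re.mp hcreal⟩
  refine ⟨r, ?_, ?_⟩
  · intro h0
    apply hcne
    rw [← hr, h0]; simp
  · show A = (r : ℂ) • B
    rw [hAcB, hr]
end
end

section
/- (Schur's lemma for magnetic groups, real case.) Let (G, φ) be a finite magnetic group and ρ a magnetic representation of (G, φ) on ℂⁿ whose restriction to G₀ is irreducible as a classical representation (the only ℂ-linear subspaces W ⊆ ℂⁿ with ρ(g)·W ⊆ W for all g ∈ G₀ are 0 and ℂⁿ). Then every T ∈ End_{(G,φ)}(ρ) equals r·I for some real number r; in particular End_{(G,φ)}(ρ) is isomorphic to ℝ as an ℝ-algebra. -/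
open Matrix

noncomputable section

theorem stmt12 {G : Type*} [Group G] [Finite G]
    (φ : G →* Multiplicative (ZMod 2)) (hφ : Function.Surjective φ) {n : ℕ}
    (ρ : G → Matrix.GeneralLinearGroup (Fin n) ℂ) (hρ : IsMagneticRep φ ρ)
    (hres : IsClassIrreducible fun g : φ.ker => ρ g) :
    (∀ T ∈ MagEnd φ ρ, ∃ r : ℝ, T = (r : ℂ) • (1 : Matrix (Fin n) (Fin n) ℂ)) ∧
      Nonempty (MagEnd φ ρ ≃ₐ[ℝ] ℝ) := by
  classical
  have hnt : Nontrivial (Fin n → ℂ) := by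
    by_contra h
    rw [not_nontrivial_iff_subsingleton] at h
    exact hres.1 (Subsingleton.elim _ _)
  have hne : Nonempty (Fin n) := by
    by_contra h
    haveI : IsEmpty (Fin n) := not_nonempty_iff.mp h
    obtain ⟨a, b, hab⟩ := hnt
    exact hab (Subsingleton.elim a b)
  obtain ⟨i0⟩ := hne
  haveI : Nontrivial (Matrix (Fin n) (Fin n) ℂ) := by
    refine ⟨1, 0, fun h => ?_⟩
    have := congrFun (congrFun h i0) i0
    simp [Matrix.one_apply] at this
  have key : ∀ T ∈ MagEnd φ ρ, ∃ r : ℝ, T = (r : ℂ) • (1 : Matrix (Fin n) (Fin n) ℂ) := by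
    intro T hT
    -- T commutes with ρ on the kernel
    have hcomm : ∀ h : φ.ker, T * (ρ (h : G) : Matrix (Fin n) (Fin n) ℂ) =
        (ρ (h : G) : Matrix (Fin n) (Fin n) ℂ) * T := by
      intro h
      have := hT (h : G)
      have h1 : φ (h : G) = 1 := h.2
      rwa [show sigmaPow (φ (h : G)) T = T by simp [sigmaPow, h1]] at this
    -- get an eigenvalue of T
    obtain ⟨c, hc⟩ := Module.End.exists_eigenvalue (Matrix.mulVecLin T)
    obtain ⟨v, hv⟩ := hc.exists_hasEigenvector
    -- the eigenspace as a submodule, invariant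
    set W : Submodule ℂ (Fin n → ℂ) := LinearMap.ker (Matrix.mulVecLin T - c • LinearMap.id) with hWdef
    have hmemW : ∀ w : Fin n → ℂ, w ∈ W ↔ T.mulVec w = c • w := by
      intro w
      simp [hWdef, LinearMap.mem_ker, sub_eq_zero]
    have hWinv : ∀ h : φ.ker, ∀ w ∈ W,
        ((ρ (h : G) : Matrix (Fin n) (Fin n) ℂ)).mulVec w ∈ W := by
      intro h w hw
      rw [hmemW] at hw ⊢
      rw [Matrix.mulVec_mulVec, hcomm h, ← Matrix.mulVec_mulVec, hw,
        Matrix.mulVec_smul]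
    have hWne : W ≠ ⊥ := by
      intro hbot
      have hvW : v ∈ W := by
        rw [hmemW]
        simpa using hv.apply_eq_smul
      rw [hbot, Submodule.mem_bot] at hvW
      exact hv.2 hvW
    have hWtop : W = ⊤ := (hres.2 W hWinv).resolve_left hWne
    have hTeq : T = c • (1 : Matrix (Fin n) (Fin n) ℂ) := by
      ext i j
      have hj : (Pi.single j 1 : Fin n → ℂ) ∈ W := hWtop ▸ Submodule.mem_top
      rw [hmemW] at hj
      have := congrFun hj i
      simpa [Matrix.mulVec_single, Matrix.one_apply, Pi.single_apply, mul_comm] using this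
    -- c is real
    obtain ⟨a, ha⟩ := hφ (Multiplicative.ofAdd (1 : ZMod 2))
    have hane : φ a ≠ 1 := by rw [ha]; decide
    have hTa := hT a
    have hσ : sigmaPow (φ a) T = conjMat T := by simp [sigmaPow, hane]
    rw [hσ, hTeq] at hTa
    have hconj : conjMat ((c • (1 : Matrix (Fin n) (Fin n) ℂ))) =
        (starRingEnd ℂ c) • (1 : Matrix (Fin n) (Fin n) ℂ) := by
      ext i j
      simp [conjMat, Matrix.one_apply, apply_ite (starRingEnd ℂ)]
    rw [hconj, smul_mul_assoc, mul_smul_comm, one_mul, mul_one] at hTa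
    have hρa : ((ρ a : Matrix (Fin n) (Fin n) ℂ)) ≠ 0 := by
      have := (ρ a).ne_zero
      simpa using this
    have hcc : c = starRingEnd ℂ c := by
      by_contra hcc
      have := sub_eq_zero.mpr hTa
      rw [← sub_smul] at this
      rcases smul_eq_zero.mp this with h | h
      · exact hcc (sub_eq_zero.mp h)
      · exact hρa h
    obtain ⟨r, hr⟩ : ∃ r : ℝ, c = (r : ℂ) := ⟨c.re, (Complex.conj_eq_iff_re.mp hcc.symm).symm⟩
    exact ⟨r, by rw [hTeq, hr]⟩
  refine ⟨key, ?_⟩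
  have halg : ∀ r : ℝ, algebraMap ℝ (Matrix (Fin n) (Fin n) ℂ) r =
      (r : ℂ) • (1 : Matrix (Fin n) (Fin n) ℂ) := by
    intro r
    ext i j
    by_cases hij : i = j <;>
      simp [Matrix.algebraMap_matrix_apply, Matrix.one_apply, hij]
  have hbot : MagEnd φ ρ = ⊥ := by
    apply le_antisymm _ bot_le
    intro T hT
    obtain ⟨r, hr⟩ := key T hT
    rw [Algebra.mem_bot]
    exact ⟨r, by rw [halg, hr]⟩
  exact ⟨(Subalgebra.equivOfEq _ ⊥ hbot).trans
    (Algebra.botEquivOfInjective (algebraMap ℝ (Matrix (Fin n) (Fin n) ℂ)).injective)⟩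
end
end
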